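/- arXiv:2310.13465 — 9 statements merged into one kernel-verified Lean document; each statement's English description precedes it below -/
import Mathlib

section
/- Let a = (a_1,…,a_d) ∈ ℝ^d with a_1 ≥ ⋯ ≥ a_d and a_1 > a_d, let M = #P, and let h ≥ 0 be a real number satisfying h ≤ ∑_{(i,j)∈S_p}(a_i − a_j) for every p ∈ P. Then L^P_h(a) ≤ #S(P) − (M − 1)/2. (This is the analytic content of the paper's Theorem on the upper bound for the Lyapunov dimension: for a P-Anosov representation the Lyapunov exponent vector a = λ(ρ_*μ) and the random walk entropy h = h_μ satisfy the stated hypotheses, and dim_LY = L^P_{h_μ}(λ) while #S(P) = dim 𝓕_P.) -/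
open Finset

/-- The set of pairs `(i,j)` with `1 ≤ i < j ≤ d` separated by some `p ∈ A`,
i.e. `i ≤ p < j`.  For `A = {p}` this is `S_p`, and for `A = P` it is `S(P)`. -/
def pairSep (d : ℕ) (A : Finset ℕ) : Finset (ℕ × ℕ) :=
  (Finset.Icc 1 d ×ˢ Finset.Icc 1 d).filter fun q => ∃ p ∈ A, q.1 ≤ p ∧ p < q.2

/-- The Lyapunov functional `L^P_h(a)`: the maximum of `∑ r_{ij}` over families
`0 ≤ r_{ij} ≤ 1` indexed by `S(P)` with `∑ r_{ij} (a_i - a_j) ≤ h`. -/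
noncomputable def Lfun (d : ℕ) (P : Finset ℕ) (a : ℕ → ℝ) (h : ℝ) : ℝ :=
  sSup { s : ℝ | ∃ r : ℕ × ℕ → ℝ,
    (∀ q ∈ pairSep d P, 0 ≤ r q ∧ r q ≤ 1) ∧
    (∑ q ∈ pairSep d P, r q * (a q.1 - a q.2)) ≤ h ∧
    s = ∑ q ∈ pairSep d P, r q }

/-! For a feasible family `r` and `p ∈ P`, the constraints `∑ r α ≤ h ≤ ∑_{S_p} α` give
`∑_{S(P) ∖ S_p} α ≤ ∑_{S(P)} (1 - r) α ≤ (a₁ - a_d) ∑_{S(P)} (1 - r)`.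
Summed over `p ∈ P`, the left-hand sides add up to at least `(M choose 2) (a₁ - a_d)`: for each
pair `p < p'` in `P`, telescope `a₁ - a_d` through `a_{p+1}` and `a_{p'+1}`; every piece lies in
`S(P)` but outside `S_p` or `S_{p'}`, and distinct pairs `p < p'` use distinct pieces.
Dividing by `M (a₁ - a_d) > 0` gives `∑ (1 - r) ≥ (M - 1)/2`. -/

section pairSep

variable {d : ℕ} {A : Finset ℕ}

lemma mem_pairSep {q : ℕ × ℕ} :
    q ∈ pairSep d A ↔ (1 ≤ q.1 ∧ q.1 ≤ d) ∧ (1 ≤ q.2 ∧ q.2 ≤ d) ∧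
      ∃ p ∈ A, q.1 ≤ p ∧ p < q.2 := by
  simp [pairSep, and_assoc]

lemma pairSep_mono {B : Finset ℕ} (h : A ⊆ B) : pairSep d A ⊆ pairSep d B := by
  intro q hq
  obtain ⟨hi, hj, p, hp, hpq⟩ := mem_pairSep.1 hq
  exact mem_pairSep.2 ⟨hi, hj, p, h hp, hpq⟩

lemma mk_mem_pairSep (hA : A ⊆ Icc 1 (d - 1)) {i j p : ℕ} (hp : p ∈ A) (hi : 1 ≤ i)
    (hj : j ≤ d) (hip : i ≤ p) (hpj : p < j) : (i, j) ∈ pairSep d A := by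
  have := mem_Icc.1 (hA hp)
  exact mem_pairSep.2 ⟨⟨hi, by omega⟩, ⟨by omega, hj⟩, p, hp, hip, hpj⟩

lemma mk_notMem_pairSep_singleton {i j p : ℕ} (h : j ≤ p ∨ p < i) :
    (i, j) ∉ pairSep d {p} := by
  simp only [mem_pairSep, mem_singleton, exists_eq_left]
  omega

lemma card_le_card_pairSep (hA : A ⊆ Icc 1 (d - 1)) : #A ≤ #(pairSep d A) := by
  refine card_le_card_of_injOn (fun p => (p, p + 1)) (fun p hp => ?_)
    (fun _ _ _ _ h => congrArg Prod.fst h)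
  have := mem_Icc.1 (hA hp)
  exact mk_mem_pairSep hA hp this.1 (by omega) le_rfl p.lt_succ_self

variable {a : ℕ → ℝ} (ha : AntitoneOn a (Icc 1 d))
include ha

lemma sub_nonneg_of_mem_pairSep {q : ℕ × ℕ} (hq : q ∈ pairSep d A) :
    0 ≤ a q.1 - a q.2 := by
  obtain ⟨hi, hj, p, -, hip, hpj⟩ := mem_pairSep.1 hq
  exact sub_nonneg.2 (ha (mem_Icc.2 hi) (mem_Icc.2 hj) (by omega))

lemma sub_le_of_mem_pairSep {q : ℕ × ℕ} (hq : q ∈ pairSep d A) :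
    a q.1 - a q.2 ≤ a 1 - a d := by
  obtain ⟨hi, hj, -⟩ := mem_pairSep.1 hq
  have h1 := ha (mem_Icc.2 ⟨le_rfl, hi.1.trans hi.2⟩) (mem_Icc.2 hi) hi.1
  have h2 := ha (mem_Icc.2 hj) (mem_Icc.2 ⟨hj.1.trans hj.2, le_rfl⟩) hj.2
  linarith

end pairSep

/-- For `p < p'` in `P`, the splitting of `a 1 - a d` into
`(a 1 - a (p+1)) + (a (p+1) - a (p'+1)) + (a (p'+1) - a d)`, each piece `(i, j)` tagged with an
element of `{p, p'}` that does not separate it. If `p'` is the maximum `m` of `P`, the pair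
`(p'+1, d)` is not in `S(P)`, so the last two pieces are merged. -/
def pairPieces (d m : ℕ) (z : ℕ × ℕ) : Finset (ℕ × (ℕ × ℕ)) :=
  if z.2 = m then {(z.2, (1, z.1 + 1)), (z.1, (z.1 + 1, d))}
  else {(z.2, (1, z.1 + 1)), (z.1, (z.1 + 1, z.2 + 1)), (z.1, (z.2 + 1, d))}

lemma sum_pairPieces (a : ℕ → ℝ) {d m : ℕ} {z : ℕ × ℕ} (hz : z.1 < z.2) :
    ∑ t ∈ pairPieces d m z, (a t.2.1 - a t.2.2) = a 1 - a d := by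
  unfold pairPieces
  split_ifs
  · rw [sum_pair (by simp; omega)]; ring
  · rw [sum_insert (by simp; omega), sum_pair (by simp; omega)]; ring

lemma pairwiseDisjoint_pairPieces {d m : ℕ} (hm : m < d) :
    {z : ℕ × ℕ | z.1 < z.2 ∧ z.2 ≤ m}.PairwiseDisjoint (pairPieces d m) := by
  rintro ⟨x₁, y₁⟩ ⟨h₁, h₁'⟩ ⟨x₂, y₂⟩ ⟨h₂, h₂'⟩ hne
  simp only [Function.onFun, pairPieces, disjoint_left, ne_eq, Prod.mk.injEq] at *
  split_ifs <;> simp <;> omega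

lemma pairPieces_subset {d m : ℕ} {P : Finset ℕ} (hPsub : P ⊆ Icc 1 (d - 1)) (hmP : m ∈ P)
    (hmax : ∀ p ∈ P, p ≤ m) {z : ℕ × ℕ} (hz₁ : z.1 ∈ P) (hz₂ : z.2 ∈ P)
    (hlt : z.1 < z.2) :
    pairPieces d m z ⊆ {w ∈ P ×ˢ pairSep d P | w.2 ∉ pairSep d {w.1}} := by
  have h₁ := mem_Icc.1 (hPsub hz₁)
  have h₂ := mem_Icc.1 (hPsub hz₂)
  have hm := mem_Icc.1 (hPsub hmP)
  have hz₂m := hmax _ hz₂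
  intro w hw
  simp only [pairPieces] at hw
  split_ifs at hw <;> simp only [mem_insert, mem_singleton] at hw <;>
    rcases hw with rfl | rfl | rfl <;> simp only [mem_filter, mem_product]
  · exact ⟨⟨hz₂, mk_mem_pairSep hPsub hz₁ le_rfl (by omega) (by omega) (by omega)⟩,
      mk_notMem_pairSep_singleton (by omega)⟩
  · exact ⟨⟨hz₁, mk_mem_pairSep hPsub hz₂ (by omega) le_rfl (by omega) (by omega)⟩,
      mk_notMem_pairSep_singleton (by omega)⟩
  · exact ⟨⟨hz₂, mk_mem_pairSep hPsub hz₁ le_rfl (by omega) (by omega) (by omega)⟩,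
      mk_notMem_pairSep_singleton (by omega)⟩
  · exact ⟨⟨hz₁, mk_mem_pairSep hPsub hz₂ (by omega) (by omega) (by omega) (by omega)⟩,
      mk_notMem_pairSep_singleton (by omega)⟩
  · exact ⟨⟨hz₁, mk_mem_pairSep hPsub hmP (by omega) le_rfl (by omega) (by omega)⟩,
      mk_notMem_pairSep_singleton (by omega)⟩

lemma sum_sum_sdiff_eq {d : ℕ} {P : Finset ℕ} (f : ℕ × ℕ → ℝ) :
    ∑ p ∈ P, ∑ q ∈ pairSep d P \ pairSep d {p}, f q =
      ∑ w ∈ P ×ˢ pairSep d P with w.2 ∉ pairSep d {w.1}, f w.2 := by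
  rw [sum_filter, sum_product]
  simp_rw [sdiff_eq_filter, sum_filter]

theorem choose_two_mul_le_sum_sum_sdiff {d : ℕ} {P : Finset ℕ} (hP : P.Nonempty)
    (hPsub : P ⊆ Icc 1 (d - 1)) {a : ℕ → ℝ} (ha : AntitoneOn a (Icc 1 d)) :
    ((#P).choose 2 : ℝ) * (a 1 - a d) ≤
      ∑ p ∈ P, ∑ q ∈ pairSep d P \ pairSep d {p}, (a q.1 - a q.2) := by
  set m := P.max' hP
  have hmP : m ∈ P := P.max'_mem hP
  have hmax : ∀ p ∈ P, p ≤ m := fun p hp => P.le_max' p hp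
  have hmd : m < d := by have := mem_Icc.1 (hPsub hmP); omega
  set D := {z ∈ P ×ˢ P | z.1 < z.2}
  have hD : ∀ z ∈ D, z.1 ∈ P ∧ z.2 ∈ P ∧ z.1 < z.2 := by
    intro z hz
    simp only [D, mem_filter, mem_product] at hz
    exact ⟨hz.1.1, hz.1.2, hz.2⟩
  have hdisj : (D : Set (ℕ × ℕ)).PairwiseDisjoint (pairPieces d m) :=
    (pairwiseDisjoint_pairPieces hmd).subset fun z hz =>
      ⟨(hD z hz).2.2, hmax _ (hD z hz).2.1⟩
  calc ((#P).choose 2 : ℝ) * (a 1 - a d)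
      = ∑ z ∈ D, ∑ t ∈ pairPieces d m z, (a t.2.1 - a t.2.2) := by
        rw [sum_congr rfl fun z hz => sum_pairPieces a (hD z hz).2.2, sum_const, nsmul_eq_mul,
          card_product_filter_lt]
    _ = ∑ t ∈ D.biUnion (pairPieces d m), (a t.2.1 - a t.2.2) := (sum_biUnion hdisj).symm
    _ ≤ ∑ w ∈ P ×ˢ pairSep d P with w.2 ∉ pairSep d {w.1}, (a w.2.1 - a w.2.2) := by
        refine sum_le_sum_of_subset_of_nonneg (biUnion_subset.2 fun z hz => ?_) fun w hw _ => ?_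
        · obtain ⟨hz₁, hz₂, hlt⟩ := hD z hz
          exact pairPieces_subset hPsub hmP hmax hz₁ hz₂ hlt
        · simp only [mem_filter, mem_product] at hw
          exact sub_nonneg_of_mem_pairSep ha hw.1.2
    _ = _ := (sum_sum_sdiff_eq fun q => a q.1 - a q.2).symm

section feasible

variable {d : ℕ} {P : Finset ℕ} {a : ℕ → ℝ} {h : ℝ} {r : ℕ × ℕ → ℝ}
  (ha : AntitoneOn a (Icc 1 d)) (hr : ∀ q ∈ pairSep d P, r q ≤ 1)
  (hrh : ∑ q ∈ pairSep d P, r q * (a q.1 - a q.2) ≤ h)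
  (hent : ∀ p ∈ P, h ≤ ∑ q ∈ pairSep d {p}, (a q.1 - a q.2))
include ha hr hrh

lemma sum_sdiff_le_mul_sum_one_sub {p : ℕ} (hp : p ∈ P)
    (hph : h ≤ ∑ q ∈ pairSep d {p}, (a q.1 - a q.2)) :
    ∑ q ∈ pairSep d P \ pairSep d {p}, (a q.1 - a q.2) ≤
      (a 1 - a d) * ∑ q ∈ pairSep d P, (1 - r q) := by
  have hsub : pairSep d {p} ⊆ pairSep d P := pairSep_mono (singleton_subset_iff.2 hp)
  calc ∑ q ∈ pairSep d P \ pairSep d {p}, (a q.1 - a q.2)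
      = ∑ q ∈ pairSep d P, (a q.1 - a q.2) - ∑ q ∈ pairSep d {p}, (a q.1 - a q.2) := by
        rw [sum_sdiff_eq_sub hsub]
    _ ≤ ∑ q ∈ pairSep d P, (a q.1 - a q.2) - ∑ q ∈ pairSep d P, r q * (a q.1 - a q.2) :=
        by linarith
    _ = ∑ q ∈ pairSep d P, (1 - r q) * (a q.1 - a q.2) := by
        rw [← sum_sub_distrib]; exact sum_congr rfl fun q _ => by ring
    _ ≤ ∑ q ∈ pairSep d P, (1 - r q) * (a 1 - a d) :=
        sum_le_sum fun q hq =>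
          mul_le_mul_of_nonneg_left (sub_le_of_mem_pairSep ha hq) (sub_nonneg.2 (hr q hq))
    _ = (a 1 - a d) * ∑ q ∈ pairSep d P, (1 - r q) := by rw [mul_sum]; simp_rw [mul_comm]

include hent in
theorem card_sub_one_div_two_le_sum_one_sub (hP : P.Nonempty) (hPsub : P ⊆ Icc 1 (d - 1))
    (hgap : a d < a 1) :
    ((#P : ℝ) - 1) / 2 ≤ ∑ q ∈ pairSep d P, (1 - r q) := by
  have hM : (0 : ℝ) < #P := by exact_mod_cast hP.card_pos
  have hA : 0 < a 1 - a d := sub_pos.2 hgap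
  refine le_of_mul_le_mul_left ?_ (mul_pos hM hA)
  calc #P * (a 1 - a d) * ((#P - 1) / 2)
      = ((#P).choose 2 : ℝ) * (a 1 - a d) := by rw [Nat.cast_choose_two]; ring
    _ ≤ ∑ p ∈ P, ∑ q ∈ pairSep d P \ pairSep d {p}, (a q.1 - a q.2) :=
        choose_two_mul_le_sum_sum_sdiff hP hPsub ha
    _ ≤ ∑ _p ∈ P, (a 1 - a d) * ∑ q ∈ pairSep d P, (1 - r q) :=
        sum_le_sum fun p hp => sum_sdiff_le_mul_sum_one_sub ha hr hrh hp (hent p hp)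
    _ = #P * (a 1 - a d) * ∑ q ∈ pairSep d P, (1 - r q) := by
        rw [sum_const, nsmul_eq_mul, mul_assoc]

end feasible

theorem stmt0_general (d : ℕ) (P : Finset ℕ) (hP : P.Nonempty)
    (hPsub : P ⊆ Finset.Icc 1 (d - 1)) (a : ℕ → ℝ)
    (ha : ∀ i j, 1 ≤ i → i ≤ j → j ≤ d → a j ≤ a i)
    (hgap : a d < a 1) (h : ℝ)
    (hent : ∀ p ∈ P, h ≤ ∑ q ∈ pairSep d {p}, (a q.1 - a q.2)) :
    Lfun d P a h ≤ ((pairSep d P).card : ℝ) - ((P.card : ℝ) - 1) / 2 := by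
  have ha' : AntitoneOn a (Icc 1 d) := fun i hi j hj hij =>
    ha i j (mem_Icc.1 hi).1 hij (mem_Icc.1 hj).2
  have hbound : ((P.card : ℝ) - 1) / 2 ≤ (pairSep d P).card := by
    have : (#P : ℝ) ≤ #(pairSep d P) := by exact_mod_cast card_le_card_pairSep hPsub
    linarith
  refine Real.sSup_le ?_ (sub_nonneg.2 hbound)
  rintro _ ⟨r, hr, hrh, rfl⟩
  have := card_sub_one_div_two_le_sum_one_sub ha' (fun q hq => (hr q hq).2) hrh hent hP hPsub hgap
  rw [sum_sub_distrib, sum_const, nsmul_one] at this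
  linarith

/-- Upper bound on the Lyapunov dimension:
if `a_1 ≥ ⋯ ≥ a_d`, `a_1 > a_d`, `h ≥ 0` and `h ≤ ∑_{(i,j) ∈ S_p} (a_i - a_j)`
for all `p ∈ P`, then `L^P_h(a) ≤ #S(P) - (#P - 1)/2`. -/
theorem stmt0 (d : ℕ) (hd : 2 ≤ d) (P : Finset ℕ) (hP : P.Nonempty)
    (hPsub : P ⊆ Finset.Icc 1 (d - 1)) (a : ℕ → ℝ)
    (ha : ∀ i j, 1 ≤ i → i ≤ j → j ≤ d → a j ≤ a i)
    (hgap : a d < a 1) (h : ℝ) (hh : 0 ≤ h)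
    (hent : ∀ p ∈ P, h ≤ ∑ q ∈ pairSep d {p}, (a q.1 - a q.2)) :
    Lfun d P a h ≤ ((pairSep d P).card : ℝ) - ((P.card : ℝ) - 1) / 2 :=
  stmt0_general d P hP hPsub a ha hgap h hent
end

section
/- Let a = (a_1,…,a_d) ∈ ℝ^d with a_1 ≥ ⋯ ≥ a_d, let M = #P, and let h ∈ ℝ satisfy h ≤ ∑_{(i,j)∈S_p}(a_i − a_j) for every p ∈ P. Then h + ((M − 1)/2)·(a_1 − a_d) ≤ ∑_{(i,j)∈S(P)}(a_i − a_j). (This is the paper's Main Lemma, with the random walk entropy h_μ replaced by any real number h satisfying the entropy upper bounds h ≤ ∑_{(i,j)∈S_p}(λ_i − λ_j) that the paper establishes for each p ∈ P.) -/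
open Finset

/-- Main Lemma: if `a_1 ≥ ⋯ ≥ a_d` and `h ≤ ∑_{(i,j) ∈ S_p} (a_i - a_j)` for
every `p ∈ P`, then `h + ((M-1)/2) (a_1 - a_d) ≤ ∑_{(i,j) ∈ S(P)} (a_i - a_j)`,
where `M = #P`. -/
theorem stmt1 (d : ℕ) (hd : 2 ≤ d) (P : Finset ℕ) (hP : P.Nonempty)
    (hPsub : P ⊆ Finset.Icc 1 (d - 1)) (a : ℕ → ℝ)
    (ha : ∀ i j, 1 ≤ i → i ≤ j → j ≤ d → a j ≤ a i)
    (h : ℝ)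
    (hent : ∀ p ∈ P, h ≤ ∑ q ∈ pairSep d {p}, (a q.1 - a q.2)) :
    h + ((P.card : ℝ) - 1) / 2 * (a 1 - a d) ≤
      ∑ q ∈ pairSep d P, (a q.1 - a q.2) := by
  classical
  set m := P.min' hP with hm
  set M := P.max' hP with hM
  have hmP : m ∈ P := P.min'_mem hP
  have hMP : M ∈ P := P.max'_mem hP
  have hM_le : M ≤ d - 1 := (Finset.mem_Icc.mp (hPsub hMP)).2
  have h1M : 1 ≤ M := (Finset.mem_Icc.mp (hPsub hMP)).1
  have h1m : 1 ≤ m := (Finset.mem_Icc.mp (hPsub hmP)).1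
  have hm_le : m ≤ d - 1 := (Finset.mem_Icc.mp (hPsub hmP)).2
  set E := P.erase M with hE
  set T1 := E.image (fun p => ((1 : ℕ), p + 1)) with hT1
  set T2 := E.image (fun p => (p + 1, d)) with hT2
  -- nonnegativity of terms over pairSep d P
  have hnonneg : ∀ q ∈ pairSep d P, 0 ≤ a q.1 - a q.2 := by
    intro q hq
    simp only [pairSep, mem_filter, mem_product, mem_Icc] at hq
    obtain ⟨⟨⟨h1, _⟩, _, h4⟩, p, hp, hle, hlt⟩ := hq
    have := ha q.1 q.2 h1 (by omega) h4
    linarith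
  -- singletons are subsets
  have hsub : ∀ p ∈ P, pairSep d {p} ⊆ pairSep d P := by
    intro p hp q hq
    simp only [pairSep, mem_filter, mem_singleton] at hq ⊢
    obtain ⟨hq1, p', hp', hle, hlt⟩ := hq
    subst hp'
    exact ⟨hq1, p', hp, hle, hlt⟩
  -- facts about elements of E
  have hEfact : ∀ p ∈ E, 1 ≤ p ∧ p < M := by
    intro p hpE
    have hpP : p ∈ P := mem_of_mem_erase hpE
    exact ⟨(Finset.mem_Icc.mp (hPsub hpP)).1,
      lt_of_le_of_ne (P.le_max' p hpP) (ne_of_mem_erase hpE)⟩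
  have hT1sub : T1 ⊆ pairSep d P := by
    intro q hq
    simp only [hT1, mem_image] at hq
    obtain ⟨p, hpE, rfl⟩ := hq
    obtain ⟨h1p, hpM⟩ := hEfact p hpE
    simp only [pairSep, mem_filter, mem_product, mem_Icc]
    exact ⟨⟨⟨le_refl 1, by omega⟩, by omega, by omega⟩, p, mem_of_mem_erase hpE,
      h1p, by omega⟩
  have hT2sub : T2 ⊆ pairSep d P := by
    intro q hq
    simp only [hT2, mem_image] at hq
    obtain ⟨p, hpE, rfl⟩ := hq
    obtain ⟨h1p, hpM⟩ := hEfact p hpE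
    simp only [pairSep, mem_filter, mem_product, mem_Icc]
    exact ⟨⟨⟨by omega, by omega⟩, by omega, le_refl d⟩, M, hMP, by omega, by omega⟩
  -- disjointness
  have hdis1 : Disjoint (pairSep d {M}) T1 := by
    rw [Finset.disjoint_left]
    intro q hq hq'
    simp only [hT1, mem_image] at hq'
    obtain ⟨p, hpE, rfl⟩ := hq'
    simp only [pairSep, mem_filter, mem_singleton] at hq
    obtain ⟨_, p', rfl, hle, hlt⟩ := hq
    have := (hEfact p hpE).2
    omega
  have hdis2 : Disjoint (pairSep d {m}) T2 := by
    rw [Finset.disjoint_left]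
    intro q hq hq'
    simp only [hT2, mem_image] at hq'
    obtain ⟨p, hpE, rfl⟩ := hq'
    simp only [pairSep, mem_filter, mem_singleton] at hq
    obtain ⟨_, p', rfl, hle, hlt⟩ := hq
    have : m ≤ p := P.min'_le p (mem_of_mem_erase hpE)
    omega
  -- the two subset inequalities
  have key : ∀ (S : Finset (ℕ × ℕ)), S ⊆ pairSep d P →
      ∑ q ∈ S, (a q.1 - a q.2) ≤ ∑ q ∈ pairSep d P, (a q.1 - a q.2) := by
    intro S hS
    exact Finset.sum_le_sum_of_subset_of_nonneg hS (fun q hq _ => hnonneg q hq)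
  have hsubM : pairSep d {M} ∪ T1 ⊆ pairSep d P :=
    Finset.union_subset (hsub M hMP) hT1sub
  have hsubm : pairSep d {m} ∪ T2 ⊆ pairSep d P :=
    Finset.union_subset (hsub m hmP) hT2sub
  have hA := key _ hsubm
  have hB := key _ hsubM
  rw [Finset.sum_union hdis2] at hA
  rw [Finset.sum_union hdis1] at hB
  -- sums over T1 and T2
  have hinj1 : ∀ x ∈ E, ∀ y ∈ E, (fun p => ((1:ℕ), p+1)) x = (fun p => ((1:ℕ), p+1)) y → x = y := by
    intro x _ y _ hxy
    simp only [Prod.mk.injEq] at hxy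
    omega
  have hinj2 : ∀ x ∈ E, ∀ y ∈ E, (fun p => (p+1, d)) x = (fun p => (p+1, d)) y → x = y := by
    intro x _ y _ hxy
    simp only [Prod.mk.injEq] at hxy
    omega
  have hs1 : ∑ q ∈ T1, (a q.1 - a q.2) = ∑ p ∈ E, (a 1 - a (p+1)) := by
    rw [hT1, Finset.sum_image hinj1]
  have hs2 : ∑ q ∈ T2, (a q.1 - a q.2) = ∑ p ∈ E, (a (p+1) - a d) := by
    rw [hT2, Finset.sum_image hinj2]
  have hsum12 : ∑ q ∈ T1, (a q.1 - a q.2) + ∑ q ∈ T2, (a q.1 - a q.2)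
      = (E.card : ℝ) * (a 1 - a d) := by
    rw [hs1, hs2, ← Finset.sum_add_distrib]
    have : ∀ p ∈ E, (a 1 - a (p+1)) + (a (p+1) - a d) = a 1 - a d := by
      intro p _; ring
    rw [Finset.sum_congr rfl this, Finset.sum_const, nsmul_eq_mul]
  have hcard : (E.card : ℝ) = (P.card : ℝ) - 1 := by
    rw [hE, Finset.card_erase_of_mem hMP,
      Nat.cast_sub (Finset.card_pos.mpr hP), Nat.cast_one]
  have hhm := hent m hmP
  have hhM := hent M hMP
  rw [hcard] at hsum12
  linarith
end

section
/- Let a = (a_1,…,a_d) ∈ ℝ^d with a_1 ≥ ⋯ ≥ a_d be such that α_{i,j}(a) > 0 for all (i,j) ∈ S(P), and let D = #S(P). Then the map r ↦ F^P_r(a) is a strictly increasing continuous bijection (an increasing homeomorphism) from the interval [0, D] onto the interval [0, F^P_D(a)], and the map h ↦ L^P_h(a), restricted to [0, F^P_D(a)], is its inverse. -/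
open Finset

/-- The Falconer functional `F^P_r(a)`. -/
noncomputable def Ffun (d : ℕ) (P : Finset ℕ) (a : ℕ → ℝ) (r : ℝ) : ℝ :=
  sInf { s : ℝ | ∃ c : ℕ × ℕ → ℝ,
    (∀ q ∈ pairSep d P, 0 ≤ c q ∧ c q ≤ 1) ∧
    r ≤ ∑ q ∈ pairSep d P, c q ∧
    s = ∑ q ∈ pairSep d P, c q * (a q.1 - a q.2) }

/-- Duality between the Falconer and Lyapunov functionals: if all the roots
`α_{ij}(a) = a_i - a_j`, `(i,j) ∈ S(P)`, are positive, then `r ↦ F^P_r(a)` is a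
strictly increasing continuous bijection from `[0, D]` onto `[0, F^P_D(a)]`,
where `D = #S(P)`, and `h ↦ L^P_h(a)` restricted to `[0, F^P_D(a)]` is its
inverse. -/
theorem stmt2 (d : ℕ) (hd : 2 ≤ d) (P : Finset ℕ) (hP : P.Nonempty)
    (hPsub : P ⊆ Finset.Icc 1 (d - 1)) (a : ℕ → ℝ)
    (ha : ∀ i j, 1 ≤ i → i ≤ j → j ≤ d → a j ≤ a i)
    (hpos : ∀ q ∈ pairSep d P, 0 < a q.1 - a q.2)
    (D : ℕ) (hD : D = (pairSep d P).card) :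
    StrictMonoOn (Ffun d P a) (Set.Icc 0 (D : ℝ)) ∧
    ContinuousOn (Ffun d P a) (Set.Icc 0 (D : ℝ)) ∧
    Set.BijOn (Ffun d P a) (Set.Icc 0 (D : ℝ)) (Set.Icc 0 (Ffun d P a (D : ℝ))) ∧
    (∀ r ∈ Set.Icc 0 (D : ℝ), Lfun d P a (Ffun d P a r) = r) ∧
    (∀ h ∈ Set.Icc 0 (Ffun d P a (D : ℝ)), Ffun d P a (Lfun d P a h) = h) := by
  classical
  -- abbreviations
  set S : Finset (ℕ × ℕ) := pairSep d P with hSdef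
  set FS : ℝ → Set ℝ := fun r => { s : ℝ | ∃ c : ℕ × ℕ → ℝ,
    (∀ q ∈ S, 0 ≤ c q ∧ c q ≤ 1) ∧
    r ≤ ∑ q ∈ S, c q ∧
    s = ∑ q ∈ S, c q * (a q.1 - a q.2) } with hFSdef
  set LS : ℝ → Set ℝ := fun h => { s : ℝ | ∃ c : ℕ × ℕ → ℝ,
    (∀ q ∈ S, 0 ≤ c q ∧ c q ≤ 1) ∧
    (∑ q ∈ S, c q * (a q.1 - a q.2)) ≤ h ∧
    s = ∑ q ∈ S, c q } with hLSdef
  have hFeq : ∀ r, Ffun d P a r = sInf (FS r) := fun r => rfl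
  have hLeq : ∀ h, Lfun d P a h = sSup (LS h) := fun h => rfl
  -- S is nonempty
  obtain ⟨p, hp⟩ := hP
  have hpmem := Finset.mem_Icc.mp (hPsub hp)
  have hSne : S.Nonempty := by
    refine ⟨(p, p + 1), ?_⟩
    rw [hSdef]
    simp only [pairSep, Finset.mem_filter, Finset.mem_product, Finset.mem_Icc]
    exact ⟨⟨⟨hpmem.1, by omega⟩, by omega, by omega⟩, p, hp, le_refl _, by omega⟩
  have hD1 : 1 ≤ D := by rw [hD]; exact Finset.card_pos.mpr hSne
  have hDpos : (0:ℝ) < (D:ℝ) := by exact_mod_cast Nat.lt_of_lt_of_le Nat.zero_lt_one hD1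
  have hsum1 : (∑ _q ∈ S, (1:ℝ)) = (D:ℝ) := by
    rw [Finset.sum_const, nsmul_eq_mul, mul_one, hD]
  -- min and max of the roots
  set m : ℝ := S.inf' hSne (fun q => a q.1 - a q.2) with hm
  set M : ℝ := S.sup' hSne (fun q => a q.1 - a q.2) with hM
  have hmpos : 0 < m := by
    obtain ⟨q, hq, hqe⟩ := Finset.exists_mem_eq_inf' hSne (fun q => a q.1 - a q.2)
    rw [hm, hqe]; exact hpos q hq
  have hm_le : ∀ q ∈ S, m ≤ a q.1 - a q.2 := fun q hq =>
    Finset.inf'_le (fun q => a q.1 - a q.2) hq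
  have hle_M : ∀ q ∈ S, a q.1 - a q.2 ≤ M := fun q hq =>
    Finset.le_sup' (fun q => a q.1 - a q.2) hq
  have hMpos : 0 < M := by
    obtain ⟨q, hq⟩ := hSne
    exact lt_of_lt_of_le (hpos q hq) (hle_M q hq)
  -- basic facts about FS
  have hFS_nonneg : ∀ r : ℝ, ∀ s ∈ FS r, 0 ≤ s := by
    rintro r s ⟨c, hc, -, rfl⟩
    exact Finset.sum_nonneg fun q hq => mul_nonneg (hc q hq).1 (le_of_lt (hpos q hq))
  have hbddF : ∀ r : ℝ, BddBelow (FS r) := fun r => ⟨0, fun s hs => hFS_nonneg r s hs⟩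
  have hFne : ∀ r : ℝ, r ≤ (D:ℝ) → (FS r).Nonempty := by
    intro r hr
    exact ⟨_, ⟨fun _ => 1, fun q _ => ⟨zero_le_one, le_refl 1⟩, by rw [hsum1]; exact hr, rfl⟩⟩
  have hF_le : ∀ (r : ℝ) (c : ℕ × ℕ → ℝ), (∀ q ∈ S, 0 ≤ c q ∧ c q ≤ 1) →
      r ≤ ∑ q ∈ S, c q → Ffun d P a r ≤ ∑ q ∈ S, c q * (a q.1 - a q.2) := by
    intro r c h1 h2
    rw [hFeq]
    exact csInf_le (hbddF r) ⟨c, h1, h2, rfl⟩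
  have hF_nonneg : ∀ r : ℝ, r ≤ (D:ℝ) → 0 ≤ Ffun d P a r := by
    intro r hr
    rw [hFeq]
    exact le_csInf (hFne r hr) (fun s hs => hFS_nonneg r s hs)
  have hF_lb : ∀ r : ℝ, 0 ≤ r → r ≤ (D:ℝ) → m * r ≤ Ffun d P a r := by
    intro r hr0 hrD
    rw [hFeq]
    refine le_csInf (hFne r hrD) ?_
    rintro s ⟨c, hc, hsum, rfl⟩
    calc m * r ≤ m * ∑ q ∈ S, c q := mul_le_mul_of_nonneg_left hsum (le_of_lt hmpos)
      _ = ∑ q ∈ S, m * c q := by rw [Finset.mul_sum]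
      _ ≤ ∑ q ∈ S, c q * (a q.1 - a q.2) := by
          refine Finset.sum_le_sum fun q hq => ?_
          rw [mul_comm]
          exact mul_le_mul_of_nonneg_left (hm_le q hq) (hc q hq).1
  have hF_zero : Ffun d P a 0 = 0 := by
    have h0mem : (0:ℝ) ∈ FS 0 :=
      ⟨fun _ => 0, fun q _ => ⟨le_refl 0, zero_le_one⟩, by simp, by simp⟩
    refine le_antisymm ?_ (hF_nonneg 0 (le_of_lt hDpos))
    rw [hFeq]
    exact csInf_le (hbddF 0) h0mem
  have hF_mono : ∀ r r' : ℝ, r ≤ r' → r' ≤ (D:ℝ) → Ffun d P a r ≤ Ffun d P a r' := by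
    intro r r' hrr' hr'D
    rw [hFeq, hFeq]
    refine csInf_le_csInf (hbddF r) (hFne r' hr'D) ?_
    rintro s ⟨c, hc, hsum, rfl⟩
    exact ⟨c, hc, le_trans hrr' hsum, rfl⟩
  -- strict monotonicity
  have hF_strict : ∀ r r' : ℝ, 0 ≤ r → r < r' → r' ≤ (D:ℝ) →
      Ffun d P a r < Ffun d P a r' := by
    intro r r' hr0 hrr' hr'D
    have hr'pos : 0 < r' := lt_of_le_of_lt hr0 hrr'
    have hF'pos : 0 < Ffun d P a r' :=
      lt_of_lt_of_le (mul_pos hmpos hr'pos) (hF_lb r' (le_of_lt hr'pos) hr'D)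
    rcases eq_or_lt_of_le hr0 with h0 | hrpos
    · rw [← h0, hF_zero]; exact hF'pos
    have hkey : (r' / r) * Ffun d P a r ≤ Ffun d P a r' := by
      conv_rhs => rw [hFeq]
      refine le_csInf (hFne r' hr'D) ?_
      rintro s ⟨c, hc, hsum, rfl⟩
      have ht0 : 0 ≤ r / r' := div_nonneg hr0 (le_of_lt hr'pos)
      have ht1 : r / r' ≤ 1 := (div_le_one hr'pos).mpr (le_of_lt hrr')
      have hmem : Ffun d P a r ≤ ∑ q ∈ S, ((r / r') * c q) * (a q.1 - a q.2) := by
        refine hF_le r _ (fun q hq => ⟨mul_nonneg ht0 (hc q hq).1,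
          mul_le_one₀ ht1 (hc q hq).1 (hc q hq).2⟩) ?_
        rw [← Finset.mul_sum]
        calc r = (r / r') * r' := by field_simp
          _ ≤ (r / r') * ∑ q ∈ S, c q := mul_le_mul_of_nonneg_left hsum ht0
      have h2 : Ffun d P a r ≤ (r / r') * ∑ q ∈ S, c q * (a q.1 - a q.2) := by
        rw [Finset.mul_sum]
        refine le_trans hmem (le_of_eq ?_)
        exact Finset.sum_congr rfl fun q _ => by ring
      calc (r' / r) * Ffun d P a r
          ≤ (r' / r) * ((r / r') * ∑ q ∈ S, c q * (a q.1 - a q.2)) :=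
            mul_le_mul_of_nonneg_left h2 (div_nonneg (le_of_lt hr'pos) hr0)
        _ = ∑ q ∈ S, c q * (a q.1 - a q.2) := by field_simp
    have hFr0 : 0 ≤ Ffun d P a r := hF_nonneg r (le_trans (le_of_lt hrr') hr'D)
    rcases eq_or_lt_of_le hFr0 with h0 | hFrpos
    · rw [← h0]; exact hF'pos
    · have h1 : 1 < r' / r := (one_lt_div hrpos).mpr hrr'
      calc Ffun d P a r < (r' / r) * Ffun d P a r := lt_mul_of_one_lt_left hFrpos h1
        _ ≤ Ffun d P a r' := hkey
  -- Lipschitz bound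
  have hF_lip : ∀ r r' : ℝ, 0 ≤ r → r ≤ r' → r' ≤ (D:ℝ) →
      Ffun d P a r' ≤ Ffun d P a r + M * (r' - r) := by
    intro r r' hr0 hrr' hr'D
    have h1 : Ffun d P a r' - M * (r' - r) ≤ Ffun d P a r := by
      rw [hFeq r]
      refine le_csInf (hFne r (le_trans hrr' hr'D)) ?_
      rintro s ⟨c, hc, hsum, rfl⟩
      rw [sub_le_iff_le_add]
      by_cases hT : r' ≤ ∑ q ∈ S, c q
      · have hle := hF_le r' c hc hT
        nlinarith [mul_nonneg (le_of_lt hMpos) (sub_nonneg.mpr hrr')]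
      · push_neg at hT
        set T := ∑ q ∈ S, c q with hTdef
        have hTD : T < (D:ℝ) := lt_of_lt_of_le hT hr'D
        set t : ℝ := (r' - T) / ((D:ℝ) - T) with htdef
        have ht0 : 0 ≤ t := div_nonneg (by linarith) (by linarith)
        have ht1 : t ≤ 1 := (div_le_one (by linarith)).mpr (by linarith)
        set c' : ℕ × ℕ → ℝ := fun q => c q + t * (1 - c q) with hc'def
        have hc'b : ∀ q ∈ S, 0 ≤ c' q ∧ c' q ≤ 1 := by
          intro q hq
          obtain ⟨hb1, hb2⟩ := hc q hq
          constructor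
          · have : 0 ≤ t * (1 - c q) := mul_nonneg ht0 (by linarith)
            simp only [hc'def]; linarith
          · simp only [hc'def]; nlinarith
        have hDT : (D:ℝ) - T ≠ 0 := ne_of_gt (by linarith)
        have hsumc' : ∑ q ∈ S, c' q = r' := by
          calc ∑ q ∈ S, c' q = T + t * ((D:ℝ) - T) := by
                simp only [hc'def]
                rw [Finset.sum_add_distrib, ← Finset.mul_sum, Finset.sum_sub_distrib, hsum1,
                  ← hTdef]
            _ = r' := by rw [htdef, div_mul_cancel₀ _ hDT]; ring
        have hsplit : ∑ q ∈ S, c' q * (a q.1 - a q.2)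
            = (∑ q ∈ S, c q * (a q.1 - a q.2)) + ∑ q ∈ S, (t * (1 - c q)) * (a q.1 - a q.2) := by
          rw [← Finset.sum_add_distrib]
          exact Finset.sum_congr rfl fun q _ => by simp only [hc'def]; ring
        have h2 : ∑ q ∈ S, (t * (1 - c q)) * (a q.1 - a q.2) ≤ t * (((D:ℝ) - T) * M) := by
          calc ∑ q ∈ S, (t * (1 - c q)) * (a q.1 - a q.2)
              ≤ ∑ q ∈ S, (t * (1 - c q)) * M := by
                refine Finset.sum_le_sum fun q hq => ?_
                exact mul_le_mul_of_nonneg_left (hle_M q hq)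
                  (mul_nonneg ht0 (by linarith [(hc q hq).2]))
            _ = t * (((D:ℝ) - T) * M) := by
                rw [← Finset.sum_mul, ← Finset.mul_sum, Finset.sum_sub_distrib, hsum1, ← hTdef]
                ring
        have h3 : t * (((D:ℝ) - T) * M) = (r' - T) * M := by
          rw [htdef]; field_simp
        have h4 : (r' - T) * M ≤ M * (r' - r) := by nlinarith
        have hle := hF_le r' c' hc'b (le_of_eq hsumc'.symm)
        calc Ffun d P a r' ≤ ∑ q ∈ S, c' q * (a q.1 - a q.2) := hle
          _ ≤ (∑ q ∈ S, c q * (a q.1 - a q.2)) + M * (r' - r) := by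
              rw [hsplit]; linarith
    linarith
  -- continuity
  have hF_cont : ContinuousOn (Ffun d P a) (Set.Icc 0 (D:ℝ)) := by
    refine LipschitzOnWith.continuousOn (K := Real.toNNReal M) ?_
    refine LipschitzOnWith.of_dist_le_mul ?_
    intro x hx y hy
    have hx' : 0 ≤ x ∧ x ≤ (D:ℝ) := hx
    have hy' : 0 ≤ y ∧ y ≤ (D:ℝ) := hy
    have hM' : (Real.toNNReal M : ℝ) = M := Real.coe_toNNReal _ (le_of_lt hMpos)
    rw [Real.dist_eq, Real.dist_eq, hM']
    rcases le_total x y with hxy | hxy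
    · have h1 := hF_mono x y hxy hy'.2
      have h2 := hF_lip x y hx'.1 hxy hy'.2
      rw [abs_of_nonpos (by linarith), abs_of_nonpos (by linarith)]
      linarith
    · have h1 := hF_mono y x hxy hx'.2
      have h2 := hF_lip y x hy'.1 hxy hx'.2
      rw [abs_of_nonneg (by linarith), abs_of_nonneg (by linarith)]
      linarith
  -- strict mono on
  have hF_smOn : StrictMonoOn (Ffun d P a) (Set.Icc 0 (D:ℝ)) := by
    intro x hx y hy hxy
    exact hF_strict x y hx.1 hxy hy.2
  -- bijection
  have hmaps : Set.MapsTo (Ffun d P a) (Set.Icc 0 (D:ℝ)) (Set.Icc 0 (Ffun d P a (D:ℝ))) := by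
    intro x hx
    exact ⟨hF_nonneg x hx.2, hF_mono x _ hx.2 (le_refl _)⟩
  have hsurj : Set.SurjOn (Ffun d P a) (Set.Icc 0 (D:ℝ)) (Set.Icc 0 (Ffun d P a (D:ℝ))) := by
    have hiv := intermediate_value_Icc (le_of_lt hDpos) hF_cont
    rw [hF_zero] at hiv
    exact hiv
  have hbij : Set.BijOn (Ffun d P a) (Set.Icc 0 (D:ℝ)) (Set.Icc 0 (Ffun d P a (D:ℝ))) :=
    ⟨hmaps, hF_smOn.injOn, hsurj⟩
  -- facts about LS
  have hLS_le : ∀ h : ℝ, ∀ s ∈ LS h, s ≤ (D:ℝ) := by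
    rintro h s ⟨c, hc, -, rfl⟩
    calc ∑ q ∈ S, c q ≤ ∑ _q ∈ S, (1:ℝ) := Finset.sum_le_sum fun q hq => (hc q hq).2
      _ = (D:ℝ) := hsum1
  have hbddL : ∀ h : ℝ, BddAbove (LS h) := fun h => ⟨(D:ℝ), fun s hs => hLS_le h s hs⟩
  have hL0mem : ∀ h : ℝ, 0 ≤ h → (0:ℝ) ∈ LS h := by
    intro h h0
    exact ⟨fun _ => 0, fun q _ => ⟨le_refl 0, zero_le_one⟩, by simpa using h0, by simp⟩
  have hL_nonneg : ∀ h : ℝ, 0 ≤ h → 0 ≤ Lfun d P a h := by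
    intro h h0; rw [hLeq]; exact le_csSup (hbddL h) (hL0mem h h0)
  -- L ∘ F = id
  have hLF : ∀ r ∈ Set.Icc (0:ℝ) (D:ℝ), Lfun d P a (Ffun d P a r) = r := by
    rintro r ⟨hr0, hrD⟩
    have hFr0 : 0 ≤ Ffun d P a r := hF_nonneg r hrD
    have hub : Lfun d P a (Ffun d P a r) ≤ r := by
      rw [hLeq]
      refine csSup_le ⟨0, hL0mem _ hFr0⟩ ?_
      rintro s ⟨c, hc, hval, rfl⟩
      by_contra hcon
      push_neg at hcon
      have hTD : ∑ q ∈ S, c q ≤ (D:ℝ) := by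
        calc ∑ q ∈ S, c q ≤ ∑ _q ∈ S, (1:ℝ) := Finset.sum_le_sum fun q hq => (hc q hq).2
          _ = (D:ℝ) := hsum1
      have h1 := hF_le (∑ q ∈ S, c q) c hc (le_refl _)
      have h2 := hF_strict r (∑ q ∈ S, c q) hr0 hcon hTD
      linarith
    have hlb : r ≤ Lfun d P a (Ffun d P a r) := by
      rcases eq_or_lt_of_le hr0 with h0 | hrpos
      · subst h0; exact hL_nonneg _ hFr0
      refine le_of_forall_pos_le_add ?_
      intro ε hε
      rcases le_or_gt r ε with hre | hre
      · have := hL_nonneg _ hFr0; linarith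
      have hFrpos : 0 < Ffun d P a r :=
        lt_of_lt_of_le (mul_pos hmpos hrpos) (hF_lb r (le_of_lt hrpos) hrD)
      obtain ⟨s0, hs0mem, hs0lt⟩ :
          ∃ s0 ∈ FS r, s0 < Ffun d P a r + Ffun d P a r * ε / r := by
        refine exists_lt_of_csInf_lt (hFne r hrD) ?_
        rw [← hFeq]
        have : 0 < Ffun d P a r * ε / r := by positivity
        linarith
      obtain ⟨c, hc, hsum, rfl⟩ := hs0mem
      rcases le_or_gt (∑ q ∈ S, c q * (a q.1 - a q.2)) (Ffun d P a r) with hle | hgt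
      · have hmem : (∑ q ∈ S, c q) ∈ LS (Ffun d P a r) := ⟨c, hc, hle, rfl⟩
        have := le_csSup (hbddL _) hmem
        rw [hLeq]
        linarith
      · obtain ⟨s0, hs0def⟩ : ∃ s0 : ℝ, s0 = ∑ q ∈ S, c q * (a q.1 - a q.2) := ⟨_, rfl⟩
        rw [← hs0def] at hs0lt hgt
        have hs0pos : 0 < s0 := lt_trans hFrpos hgt
        set t : ℝ := Ffun d P a r / s0 with htdef
        have ht0 : 0 ≤ t := div_nonneg hFr0 (le_of_lt hs0pos)
        have ht1 : t ≤ 1 := le_of_lt ((div_lt_one hs0pos).mpr hgt)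
        have hmem : (∑ q ∈ S, t * c q) ∈ LS (Ffun d P a r) := by
          refine ⟨fun q => t * c q, fun q hq => ⟨mul_nonneg ht0 (hc q hq).1,
            mul_le_one₀ ht1 (hc q hq).1 (hc q hq).2⟩, ?_, rfl⟩
          have : ∑ q ∈ S, (t * c q) * (a q.1 - a q.2) = t * s0 := by
            rw [hs0def, Finset.mul_sum]
            exact Finset.sum_congr rfl fun q _ => by ring
          rw [this, htdef, div_mul_cancel₀ _ (ne_of_gt hs0pos)]
        have hLge : ∑ q ∈ S, t * c q ≤ Lfun d P a (Ffun d P a r) := by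
          rw [hLeq]; exact le_csSup (hbddL _) hmem
        have h5 : t * r ≤ ∑ q ∈ S, t * c q := by
          rw [← Finset.mul_sum]
          exact mul_le_mul_of_nonneg_left hsum ht0
        have h6 : r - ε ≤ t * r := by
          rw [htdef, div_mul_eq_mul_div, le_div_iff₀ hs0pos]
          obtain ⟨F, hFdef⟩ : ∃ F : ℝ, F = Ffun d P a r := ⟨_, rfl⟩
          rw [← hFdef] at hs0lt ⊢
          have h7 : r * s0 < r * F + F * ε := by
            have h8 := mul_lt_mul_of_pos_left hs0lt hrpos
            calc r * s0 < r * (F + F * ε / r) := h8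
              _ = r * F + F * ε := by field_simp
          have h9 : ε * F < ε * s0 := by
            rw [← hFdef] at hgt
            exact mul_lt_mul_of_pos_left hgt hε
          have h10 : (r - ε) * s0 = r * s0 - ε * s0 := by ring
          rw [h10]
          linarith
        linarith
    linarith
  -- F ∘ L = id
  have hFL : ∀ h ∈ Set.Icc (0:ℝ) (Ffun d P a (D:ℝ)), Ffun d P a (Lfun d P a h) = h := by
    rintro h ⟨h0, hFD⟩
    obtain ⟨r, hrmem, hr⟩ := hsurj ⟨h0, hFD⟩
    rw [← hr, hLF r hrmem, hr]
  exact ⟨hF_smOn, hF_cont, hbij, hLF, hFL⟩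
end

section
/- Let d ≥ 2, let k ∈ {1,…,d−1}, and let P ⊆ {1,…,d−1} be nonempty with M = #P. Then M·a_k(P) − ∑_{p∈P} b_k(p) ≥ M(M−1)/2. -/
open Finset

/-- `a_k(A)`: the number of pairs `(i,j) ∈ S(A)` with `i ≤ k < j`.
`b_k(p)` is `ak d k {p}`. -/
def ak (d k : ℕ) (A : Finset ℕ) : ℕ :=
  ((pairSep d A).filter fun q => q.1 ≤ k ∧ k < q.2).card

/-- For every `k ∈ {1,…,d-1}` and nonempty `P ⊆ {1,…,d-1}` with `M = #P`,
one has `M a_k(P) - ∑_{p ∈ P} b_k(p) ≥ M(M-1)/2`. -/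
theorem stmt4 (d k : ℕ) (hd : 2 ≤ d) (hk : k ∈ Finset.Icc 1 (d - 1))
    (P : Finset ℕ) (hP : P.Nonempty) (hPsub : P ⊆ Finset.Icc 1 (d - 1)) :
    ((P.card : ℝ) * (ak d k P : ℝ)) - ∑ p ∈ P, (ak d k {p} : ℝ) ≥
      (P.card : ℝ) * ((P.card : ℝ) - 1) / 2 := by
  obtain ⟨hk1, hk2⟩ := Finset.mem_Icc.mp hk
  have hkd : k ≤ d - 1 := hk2
  set M := P.card with hM
  set F : Finset (ℕ × ℕ) := (pairSep d P).filter (fun q => q.1 ≤ k ∧ k < q.2) with hFdef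
  have haP : ak d k P = F.card := rfl
  have hmemF : ∀ q : ℕ × ℕ, q ∈ F ↔
      (1 ≤ q.1 ∧ q.1 ≤ d ∧ 1 ≤ q.2 ∧ q.2 ≤ d ∧ (∃ p ∈ P, q.1 ≤ p ∧ p < q.2)
        ∧ q.1 ≤ k ∧ k < q.2) := by
    intro q
    simp only [hFdef, pairSep, Finset.mem_filter, Finset.mem_product, Finset.mem_Icc]
    tauto
  -- single-element counts as filters of F
  have hb : ∀ p ∈ P, ak d k {p} = (F.filter (fun q => q.1 ≤ p ∧ p < q.2)).card := by
    intro p hp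
    unfold ak
    congr 1
    ext q
    simp only [pairSep, Finset.mem_filter, Finset.mem_product, Finset.mem_Icc,
      Finset.mem_singleton, hFdef]
    constructor
    · rintro ⟨⟨hq, p', hep, h1, h2⟩, hk'⟩
      exact ⟨⟨⟨hq, p, hp, hep ▸ h1, hep ▸ h2⟩, hk'⟩, hep ▸ h1, hep ▸ h2⟩
    · rintro ⟨⟨⟨hq, _⟩, hk'⟩, h1, h2⟩
      exact ⟨⟨hq, p, rfl, h1, h2⟩, hk'⟩
  -- separation count
  set sep : ℕ × ℕ → ℕ := fun q => (P.filter (fun p => q.1 ≤ p ∧ p < q.2)).card with hsep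
  have hsep_le : ∀ q, sep q ≤ M := fun q => Finset.card_filter_le _ _
  -- sum of b over P equals sum of sep over F
  have hbsum : ∑ p ∈ P, ((ak d k {p} : ℝ)) = ∑ q ∈ F, (sep q : ℝ) := by
    have h1 : ∀ p ∈ P, ((ak d k {p} : ℝ)) =
        ∑ q ∈ F, (if q.1 ≤ p ∧ p < q.2 then (1:ℝ) else 0) := by
      intro p hp
      rw [hb p hp, Finset.card_filter]
      push_cast
      rfl
    rw [Finset.sum_congr rfl h1, Finset.sum_comm]
    congr 1
    ext q
    simp only [hsep, Finset.card_filter]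
    push_cast
    rfl
  -- the injection
  set φ : ℕ → ℕ × ℕ := fun p => if p ≤ k then (p, k+1) else (k, p+1) with hφ
  have hφmem : ∀ p ∈ P, φ p ∈ F := by
    intro p hp
    obtain ⟨hp1, hp2⟩ := Finset.mem_Icc.mp (hPsub hp)
    rw [hmemF]
    by_cases h : p ≤ k
    · simp only [hφ, if_pos h]
      refine ⟨hp1, by omega, by omega, by omega, ⟨p, hp, le_refl _, by omega⟩, h, by omega⟩
    · simp only [hφ, if_neg h]
      refine ⟨hk1, by omega, by omega, by omega, ⟨p, hp, by omega, by omega⟩, le_refl _, by omega⟩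
  have hφinj : ∀ p ∈ P, ∀ p' ∈ P, φ p = φ p' → p = p' := by
    intro p _ p' _ h
    simp only [hφ] at h
    split_ifs at h <;> simp [Prod.ext_iff] at h <;> omega
  -- double counting bound
  set S : Finset (ℕ × ℕ) := (P ×ˢ P).filter (fun z => (φ z.1).1 ≤ z.2 ∧ z.2 < (φ z.1).2)
    with hS
  have hSsum : ∑ p ∈ P, sep (φ p) = S.card := by
    rw [hS, Finset.card_filter, Finset.sum_product]
    refine Finset.sum_congr rfl fun p _ => ?_
    simp only [hsep, Finset.card_filter]
  have hanti : ∀ z : ℕ × ℕ, ((φ z.1).1 ≤ z.2 ∧ z.2 < (φ z.1).2) →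
      ((φ z.2).1 ≤ z.1 ∧ z.1 < (φ z.2).2) → z.1 = z.2 := by
    rintro ⟨p, p'⟩ h1 h2
    simp only [hφ] at h1 h2
    split_ifs at h1 h2 <;> simp at h1 h2 <;> omega
  have hScard : 2 * S.card ≤ M * M + M := by
    have hswap : (S.image Prod.swap).card = S.card :=
      Finset.card_image_of_injective _ Prod.swap_injective
    have hunion : S ∪ S.image Prod.swap ⊆ P ×ˢ P := by
      intro z hz
      rcases Finset.mem_union.mp hz with hz | hz
      · exact Finset.mem_of_mem_filter _ hz
      · obtain ⟨w, hw, rfl⟩ := Finset.mem_image.mp hz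
        have := Finset.mem_of_mem_filter _ hw
        rw [Finset.mem_product] at this ⊢
        exact ⟨this.2, this.1⟩
    have hinter : S ∩ S.image Prod.swap ⊆ P.image (fun p => (p, p)) := by
      intro z hz
      obtain ⟨hz1, hz2⟩ := Finset.mem_inter.mp hz
      obtain ⟨w, hw, hwz⟩ := Finset.mem_image.mp hz2
      have hR1 := (Finset.mem_filter.mp hz1).2
      have hzP := Finset.mem_product.mp (Finset.mem_of_mem_filter _ hz1)
      have hR2 : (φ z.2).1 ≤ z.1 ∧ z.1 < (φ z.2).2 := by
        have := (Finset.mem_filter.mp hw).2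
        have hw' : w = z.swap := by rw [← hwz]; rfl
        rw [hw'] at this
        exact this
      have heq := hanti z hR1 hR2
      exact Finset.mem_image.mpr ⟨z.1, hzP.1, by rw [Prod.ext_iff]; exact ⟨rfl, heq⟩⟩
    have h1 : S.card + (S.image Prod.swap).card =
        (S ∪ S.image Prod.swap).card + (S ∩ S.image Prod.swap).card :=
      (Finset.card_union_add_card_inter _ _).symm
    have h2 : (S ∪ S.image Prod.swap).card ≤ M * M := by
      calc (S ∪ S.image Prod.swap).card ≤ (P ×ˢ P).card := Finset.card_le_card hunion
        _ = M * M := by rw [Finset.card_product]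
    have h3 : (S ∩ S.image Prod.swap).card ≤ M :=
      le_trans (Finset.card_le_card hinter) (Finset.card_image_le.trans le_rfl)
    omega
  -- put it together over ℝ
  have hsepφ : (2 : ℝ) * ∑ p ∈ P, (sep (φ p) : ℝ) ≤ M * M + M := by
    have : ∑ p ∈ P, ((sep (φ p) : ℝ)) = (S.card : ℝ) := by
      rw [← hSsum]; push_cast; rfl
    rw [this]
    exact_mod_cast hScard
  have hMa : (M : ℝ) * (ak d k P : ℝ) = ∑ q ∈ F, (M : ℝ) := by
    rw [haP, Finset.sum_const, nsmul_eq_mul, mul_comm]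
  have hmain : ((M : ℝ) * (ak d k P : ℝ)) - ∑ p ∈ P, (ak d k {p} : ℝ)
      = ∑ q ∈ F, ((M : ℝ) - sep q) := by
    rw [hMa, hbsum, ← Finset.sum_sub_distrib]
  rw [hmain]
  have hT : P.image φ ⊆ F := by
    intro q hq
    obtain ⟨p, hp, rfl⟩ := Finset.mem_image.mp hq
    exact hφmem p hp
  have hstep : ∑ q ∈ P.image φ, ((M : ℝ) - sep q) ≤ ∑ q ∈ F, ((M : ℝ) - sep q) := by
    refine Finset.sum_le_sum_of_subset_of_nonneg hT fun q hq _ => ?_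
    have := hsep_le q
    have : (sep q : ℝ) ≤ M := by exact_mod_cast this
    linarith
  have himg : ∑ q ∈ P.image φ, ((M : ℝ) - sep q) = ∑ p ∈ P, ((M : ℝ) - sep (φ p)) :=
    Finset.sum_image hφinj
  have hfinal : ∑ p ∈ P, ((M : ℝ) - sep (φ p)) ≥ (M : ℝ) * ((M : ℝ) - 1) / 2 := by
    rw [Finset.sum_sub_distrib, Finset.sum_const, nsmul_eq_mul]
    linarith [hsepφ]
  linarith [hstep, himg.symm ▸ hfinal]
end

section
/- Let d ≥ 2, let k ∈ {1,…,d−1}, let A ⊆ {1,…,d−1}, and let p ∈ {1,…,d−1} with p ∉ A be such that |p − k| ≤ |p′ − k| for all p′ ∈ A. Then a_k(A ∪ {p}) ≥ a_k(A) + 1. -/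
open Finset

/-- If `p ∈ {1,…,d-1}` does not belong to `A ⊆ {1,…,d-1}` and is at least as
close to `k` as every element of `A`, then `a_k(A ∪ {p}) ≥ a_k(A) + 1`. -/
theorem stmt5 (d k : ℕ) (hd : 2 ≤ d) (hk : k ∈ Finset.Icc 1 (d - 1))
    (A : Finset ℕ) (hA : A ⊆ Finset.Icc 1 (d - 1))
    (p : ℕ) (hp : p ∈ Finset.Icc 1 (d - 1)) (hpA : p ∉ A)
    (hclose : ∀ p' ∈ A, |(p : ℤ) - (k : ℤ)| ≤ |(p' : ℤ) - (k : ℤ)|) :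
    ak d k A + 1 ≤ ak d k (insert p A) := by
  simp only [Finset.mem_Icc] at hk hp
  obtain ⟨hk1, hk2⟩ := hk
  obtain ⟨hp1, hp2⟩ := hp
  have hkd : k < d := by omega
  have hpd : p < d := by omega
  have hAd : ∀ a ∈ A, 1 ≤ a ∧ a ≤ d - 1 := by
    intro a ha; simpa using hA ha
  have habs : ∀ a ∈ A, ((a : ℤ) ≤ 2 * k - p ∨ (p : ℤ) ≤ a) ∧
      ((a : ℤ) ≤ p ∨ 2 * k - p ≤ a) := by
    intro a ha
    have h := hclose a ha
    rcases abs_cases ((p : ℤ) - k) with ⟨h1, _⟩ | ⟨h1, _⟩ <;>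
      rcases abs_cases ((a : ℤ) - k) with ⟨h2, _⟩ | ⟨h2, _⟩ <;>
        constructor <;> omega
  -- the new pair
  obtain ⟨i, j, hq1, hqnot⟩ : ∃ i j : ℕ,
      (1 ≤ i ∧ i ≤ d ∧ 1 ≤ j ∧ j ≤ d ∧ i ≤ p ∧ p < j ∧ i ≤ k ∧ k < j) ∧
      ∀ a ∈ A, ¬ (i ≤ a ∧ a < j) := by
    rcases le_or_gt p k with h | h
    · refine ⟨p, min (max (2 * k - p) (p + 1)) d, by omega, ?_⟩
      rintro a ha ⟨h1, h2⟩
      have h4 := hAd a ha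
      have h5 : a ≠ p := fun h => hpA (h ▸ ha)
      rcases (habs a ha).2 with h3 | h3 <;> omega
    · refine ⟨max (2 * k + 1 - p) 1, p + 1, by omega, ?_⟩
      rintro a ha ⟨h1, h2⟩
      have h4 := hAd a ha
      have h5 : a ≠ p := fun h => hpA (h ▸ ha)
      rcases (habs a ha).1 with h3 | h3 <;> omega
  set q : ℕ × ℕ := (i, j) with hqdef
  have hsub : ((pairSep d A).filter fun r => r.1 ≤ k ∧ k < r.2) ⊆
      ((pairSep d (insert p A)).filter fun r => r.1 ≤ k ∧ k < r.2) := by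
    intro r hr
    simp only [pairSep, Finset.mem_filter] at hr ⊢
    obtain ⟨⟨hr1, a, ha, ha2⟩, hr2⟩ := hr
    exact ⟨⟨hr1, a, Finset.mem_insert_of_mem ha, ha2⟩, hr2⟩
  have hqmem : q ∈ (pairSep d (insert p A)).filter fun r => r.1 ≤ k ∧ k < r.2 := by
    simp only [pairSep, Finset.mem_filter, Finset.mem_product, Finset.mem_Icc]
    exact ⟨⟨⟨⟨hq1.1, hq1.2.1⟩, hq1.2.2.1, hq1.2.2.2.1⟩,
      p, Finset.mem_insert_self _ _, hq1.2.2.2.2.1, hq1.2.2.2.2.2.1⟩,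
      hq1.2.2.2.2.2.2.1, hq1.2.2.2.2.2.2.2⟩
  have hqnotmem : q ∉ (pairSep d A).filter fun r => r.1 ≤ k ∧ k < r.2 := by
    simp only [pairSep, Finset.mem_filter, Finset.mem_product, Finset.mem_Icc]
    rintro ⟨⟨-, a, ha, ha2⟩, -⟩
    exact hqnot a ha ha2
  have hcard := Finset.card_lt_card
    ((Finset.ssubset_iff_of_subset hsub).2 ⟨q, hqmem, hqnotmem⟩)
  simp only [ak]
  omega
end

section
/- Let d ≥ 2, let k ∈ {1,…,d−1}, and let p_1,…,p_m be distinct elements of {1,…,d−1} enumerated so that |p_1 − k| ≥ |p_2 − k| ≥ ⋯ ≥ |p_m − k|. Setting A_i = {p_1,…,p_i}, one has for every i ∈ {1,…,m}: i·a_k(A_i) − ∑_{j=1}^{i} b_k(p_j) ≥ i(i−1)/2. -/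
/-!
Fix `j < i`. Every `p_{j'}` with `j < j' < i` is at least as close to `k` as `p_j`, so the pair
running from `p_{j'}` to `k` (one of `(p_{j'}, k+1)`, `(k, p_{j'}+1)`) crosses `k`, is separated by
`p_{j'} ∈ A_i`, but not by `p_j`. These `i - 1 - j` pairs are distinct, so
`a_k(A_i) ≥ b_k(p_j) + (i - 1 - j)`; summing over `j < i` gives the bound, since
`∑_{j<i} (i - 1 - j) = i(i-1)/2`.
-/

open Finset

namespace PairSep

def crossing (d k : ℕ) (A : Finset ℕ) : Finset (ℕ × ℕ) :=
  (pairSep d A).filter fun q => q.1 ≤ k ∧ k < q.2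

lemma pairSep_mono {d : ℕ} {A B : Finset ℕ} (h : A ⊆ B) : pairSep d A ⊆ pairSep d B :=
  monotone_filter_right _ fun _ _ ⟨x, hx, hsep⟩ => ⟨x, h hx, hsep⟩

lemma crossing_mono {d k : ℕ} {A B : Finset ℕ} (h : A ⊆ B) : crossing d k A ⊆ crossing d k B :=
  filter_subset_filter _ (pairSep_mono h)

/-- The shortest pair separated by `y` that crosses `k`. -/
def crossPair (k y : ℕ) : ℕ × ℕ := if y ≤ k then (y, k + 1) else (k, y + 1)

lemma crossPair_injective (k : ℕ) : Function.Injective (crossPair k) := by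
  intro x y h
  unfold crossPair at h
  split_ifs at h <;> simp only [Prod.mk.injEq] at h <;> omega

lemma crossPair_mem_crossing {d k y : ℕ} {A : Finset ℕ} (hk : k ∈ Icc 1 (d - 1))
    (hy : y ∈ Icc 1 (d - 1)) (hyA : y ∈ A) : crossPair k y ∈ crossing d k A := by
  rw [mem_Icc] at hk hy
  unfold crossPair crossing pairSep
  split_ifs with hyk
  · simp only [mem_filter, mem_product, mem_Icc]
    exact ⟨⟨by omega, y, hyA, le_rfl, by omega⟩, hyk, by omega⟩
  · simp only [mem_filter, mem_product, mem_Icc]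
    exact ⟨⟨by omega, y, hyA, by omega, by omega⟩, le_rfl, by omega⟩

/-- `q` separates `crossPair k y` only if it lies between `y` and `k`, hence closer to `k`. -/
lemma crossPair_not_mem_pairSep {d k q y : ℕ} (hyq : y ≠ q)
    (hclose : |(y : ℤ) - k| ≤ |(q : ℤ) - k|) : crossPair k y ∉ pairSep d {q} := by
  unfold crossPair pairSep
  split_ifs with hyk <;> simp only [mem_filter, mem_singleton, exists_eq_left] <;>
    rintro ⟨-, hle, hlt⟩
  · rw [abs_of_nonpos (a := (y : ℤ) - k) (by omega),
      abs_of_nonpos (a := (q : ℤ) - k) (by omega)] at hclose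
    omega
  · rw [abs_of_nonneg (a := (y : ℤ) - k) (by omega),
      abs_of_nonneg (a := (q : ℤ) - k) (by omega)] at hclose
    omega

lemma ak_singleton_add_card_le {d k q : ℕ} {A T : Finset ℕ} (hk : k ∈ Icc 1 (d - 1))
    (hq : q ∈ A) (hTA : T ⊆ A)
    (hT : ∀ y ∈ T, y ∈ Icc 1 (d - 1) ∧ y ≠ q ∧ |(y : ℤ) - k| ≤ |(q : ℤ) - k|) :
    ak d k {q} + T.card ≤ ak d k A := by
  have hdisj : Disjoint (crossing d k {q}) (T.image (crossPair k)) := by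
    refine disjoint_right.mpr fun c hc hcq => ?_
    obtain ⟨y, hyT, rfl⟩ := mem_image.mp hc
    obtain ⟨-, hyq, hclose⟩ := hT y hyT
    exact crossPair_not_mem_pairSep hyq hclose (mem_filter.mp hcq).1
  have hsub : crossing d k {q} ∪ T.image (crossPair k) ⊆ crossing d k A :=
    union_subset (crossing_mono (singleton_subset_iff.mpr hq)) fun c hc => by
      obtain ⟨y, hyT, rfl⟩ := mem_image.mp hc
      exact crossPair_mem_crossing hk (hT y hyT).1 (hTA hyT)
  calc ak d k {q} + T.card
      = (crossing d k {q} ∪ T.image (crossPair k)).card := by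
        rw [card_union_of_disjoint hdisj, card_image_of_injective _ (crossPair_injective k)]; rfl
    _ ≤ ak d k A := card_le_card hsub

end PairSep

open PairSep in
lemma ak_singleton_add_le_of_sorted {d k m : ℕ} (hk : k ∈ Icc 1 (d - 1)) {p : ℕ → ℕ}
    (hmem : ∀ j < m, p j ∈ Icc 1 (d - 1)) (hinj : ∀ i < m, ∀ j < m, p i = p j → i = j)
    (hsort : ∀ i j, i ≤ j → j < m → |(p j : ℤ) - (k : ℤ)| ≤ |(p i : ℤ) - (k : ℤ)|)
    {i j : ℕ} (hj : j < i) (him : i ≤ m) :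
    ak d k {p j} + (i - 1 - j) ≤ ak d k ((range i).image p) := by
  have hcard : ((Ico (j + 1) i).image p).card = i - 1 - j := by
    rw [card_image_of_injOn fun a ha b hb hab =>
      hinj a (by rw [coe_Ico, Set.mem_Ico] at ha; omega) b
        (by rw [coe_Ico, Set.mem_Ico] at hb; omega) hab, Nat.card_Ico]
    omega
  rw [← hcard]
  refine ak_singleton_add_card_le hk (mem_image_of_mem p (mem_range.mpr hj))
    (image_subset_image fun a ha => by rw [mem_Ico] at ha; rw [mem_range]; omega) ?_
  simp only [mem_image, mem_Ico]
  rintro _ ⟨j', hj', rfl⟩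
  exact ⟨hmem j' (by omega), fun h => by have := hinj j' (by omega) j (by omega) h; omega,
    hsort j j' (by omega) (by omega)⟩

/-- Indices are shifted by one: `p 0, …, p (m-1)` are the paper's `p_1, …, p_m`, so that
`A_i = (range i).image p`. -/
theorem stmt6_general (d k m : ℕ) (hk : k ∈ Finset.Icc 1 (d - 1))
    (p : ℕ → ℕ) (hmem : ∀ j < m, p j ∈ Finset.Icc 1 (d - 1))
    (hinj : ∀ i < m, ∀ j < m, p i = p j → i = j)
    (hsort : ∀ i j, i ≤ j → j < m → |(p j : ℤ) - (k : ℤ)| ≤ |(p i : ℤ) - (k : ℤ)|) :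
    ∀ i, 1 ≤ i → i ≤ m →
      (i : ℝ) * (ak d k ((Finset.range i).image p) : ℝ)
          - ∑ j ∈ Finset.range i, (ak d k {p j} : ℝ) ≥
        (i : ℝ) * ((i : ℝ) - 1) / 2 := by
  intro i hi him
  have hsum := sum_le_sum fun j (hj : j ∈ range i) =>
    ak_singleton_add_le_of_sorted hk hmem hinj hsort (mem_range.mp hj) him
  rw [sum_add_distrib, sum_range_reflect (fun j => j) i, sum_const, card_range,
    smul_eq_mul] at hsum
  have hgauss := sum_range_id_mul_two i
  have hreal : ((2 * ∑ j ∈ range i, ak d k {p j} + i * (i - 1) : ℕ) : ℝ)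
      ≤ ((2 * (i * ak d k ((range i).image p)) : ℕ) : ℝ) := by
    exact_mod_cast (by omega)
  push_cast [Nat.cast_sub hi] at hreal
  linarith

/-- Let `p 0, p 1, …, p (m-1)` (indices shifted by one from the paper's
`p_1,…,p_m`) be distinct elements of `{1,…,d-1}` enumerated so that
`|p_1 - k| ≥ |p_2 - k| ≥ ⋯ ≥ |p_m - k|`.  Setting
`A_i = {p_1,…,p_i}`, for every `1 ≤ i ≤ m` one has
`i·a_k(A_i) − ∑_{j=1}^{i} b_k(p_j) ≥ i(i−1)/2`. -/
theorem stmt6 (d k m : ℕ) (hd : 2 ≤ d) (hk : k ∈ Finset.Icc 1 (d - 1))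
    (p : ℕ → ℕ) (hmem : ∀ j < m, p j ∈ Finset.Icc 1 (d - 1))
    (hinj : ∀ i < m, ∀ j < m, p i = p j → i = j)
    (hsort : ∀ i j, i ≤ j → j < m → |(p j : ℤ) - (k : ℤ)| ≤ |(p i : ℤ) - (k : ℤ)|) :
    ∀ i, 1 ≤ i → i ≤ m →
      (i : ℝ) * (ak d k ((Finset.range i).image p) : ℝ)
          - ∑ j ∈ Finset.range i, (ak d k {p j} : ℝ) ≥
        (i : ℝ) * ((i : ℝ) - 1) / 2 :=
  stmt6_general d k m hk p hmem hinj hsort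
end

section
/- Let a = (a_1,…,a_d) ∈ ℝ^d with a_1 ≥ ⋯ ≥ a_d and a_1 > a_d, and let h ≥ 0. Then L^P_h(a) ≤ #S(P) − (∑_{(i,j)∈S(P)}(a_i − a_j) − h)/(a_1 − a_d). -/
open Finset

/-- If `a_1 ≥ ⋯ ≥ a_d`, `a_1 > a_d` and `h ≥ 0`, then
`L^P_h(a) ≤ #S(P) - (∑_{(i,j) ∈ S(P)} (a_i - a_j) - h)/(a_1 - a_d)`. -/
theorem stmt10 (d : ℕ) (hd : 2 ≤ d) (P : Finset ℕ) (hP : P.Nonempty)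
    (hPsub : P ⊆ Finset.Icc 1 (d - 1)) (a : ℕ → ℝ)
    (ha : ∀ i j, 1 ≤ i → i ≤ j → j ≤ d → a j ≤ a i)
    (hgap : a d < a 1) (h : ℝ) (hh : 0 ≤ h) :
    Lfun d P a h ≤ ((pairSep d P).card : ℝ) -
      ((∑ q ∈ pairSep d P, (a q.1 - a q.2)) - h) / (a 1 - a d) := by
  have hgap' : 0 < a 1 - a d := by linarith
  apply csSup_le
  · exact ⟨0, fun _ => 0, fun q hq => by norm_num, by simpa using hh, by simp⟩
  · rintro s ⟨r, hr, hsum, rfl⟩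
    have hbounds : ∀ q ∈ pairSep d P, (1 - r q) * (a q.1 - a q.2) ≤
        (1 - r q) * (a 1 - a d) := by
      intro q hq
      obtain ⟨hq1, hq2⟩ := Finset.mem_product.mp (Finset.mem_filter.mp hq).1
      rw [Finset.mem_Icc] at hq1 hq2
      have h1 : a q.1 ≤ a 1 := ha 1 q.1 le_rfl hq1.1 hq1.2
      have h2 : a d ≤ a q.2 := ha q.2 d hq2.1 hq2.2 le_rfl
      have := (hr q hq).2
      nlinarith
    have key : (∑ q ∈ pairSep d P, (a q.1 - a q.2)) - h ≤
        (∑ q ∈ pairSep d P, (1 - r q)) * (a 1 - a d) := by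
      calc (∑ q ∈ pairSep d P, (a q.1 - a q.2)) - h
          ≤ ∑ q ∈ pairSep d P, (1 - r q) * (a q.1 - a q.2) := by
            have : ∑ q ∈ pairSep d P, (1 - r q) * (a q.1 - a q.2) =
                (∑ q ∈ pairSep d P, (a q.1 - a q.2)) -
                ∑ q ∈ pairSep d P, r q * (a q.1 - a q.2) := by
              rw [← Finset.sum_sub_distrib]; exact Finset.sum_congr rfl fun q _ => by ring
            rw [this]; linarith
        _ ≤ ∑ q ∈ pairSep d P, (1 - r q) * (a 1 - a d) :=
            Finset.sum_le_sum hbounds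
        _ = (∑ q ∈ pairSep d P, (1 - r q)) * (a 1 - a d) := by
            rw [← Finset.sum_mul]
    have hdiv : ((∑ q ∈ pairSep d P, (a q.1 - a q.2)) - h) / (a 1 - a d) ≤
        ∑ q ∈ pairSep d P, (1 - r q) := by
      rw [div_le_iff₀ hgap']; exact key
    have hsplit : ∑ q ∈ pairSep d P, (1 - r q) =
        ((pairSep d P).card : ℝ) - ∑ q ∈ pairSep d P, r q := by
      rw [Finset.sum_sub_distrib, Finset.sum_const, nsmul_eq_mul, mul_one]
    linarith [hdiv, hsplit.symm.le]
end

section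
/- Let a = (a_1,…,a_d) ∈ ℝ^d with a_1 ≥ ⋯ ≥ a_d and α_{i,j}(a) > 0 for all (i,j) ∈ S(P); let D = #S(P) and let ζ_1 ≤ ⋯ ≤ ζ_D be the nondecreasing rearrangement of the family (α_{i,j}(a))_{(i,j)∈S(P)}. Then for every integer q with 1 ≤ q ≤ D and every real h with ∑_{k=1}^{q−1} ζ_k ≤ h ≤ ∑_{k=1}^{q} ζ_k, one has L^P_h(a) = (q − 1) + (h − ∑_{k=1}^{q−1} ζ_k)/ζ_q. -/
open Finset

/-- If all roots `α_{ij}(a)`, `(i,j) ∈ S(P)`, are positive and `ζ_1 ≤ ⋯ ≤ ζ_D`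
is their nondecreasing rearrangement (witnessed by the bijection `σ`), then
for each integer `1 ≤ q ≤ D` and real `h` with
`∑_{k=1}^{q-1} ζ_k ≤ h ≤ ∑_{k=1}^{q} ζ_k`, one has
`L^P_h(a) = (q - 1) + (h - ∑_{k=1}^{q-1} ζ_k)/ζ_q`. -/
theorem stmt12 (d : ℕ) (hd : 2 ≤ d) (P : Finset ℕ) (hP : P.Nonempty)
    (hPsub : P ⊆ Finset.Icc 1 (d - 1)) (a : ℕ → ℝ)
    (ha : ∀ i j, 1 ≤ i → i ≤ j → j ≤ d → a j ≤ a i)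
    (hpos : ∀ q ∈ pairSep d P, 0 < a q.1 - a q.2)
    (D : ℕ) (hD : D = (pairSep d P).card)
    (ζ : ℕ → ℝ) (hζ : ∀ k l, 1 ≤ k → k ≤ l → l ≤ D → ζ k ≤ ζ l)
    (σ : ℕ × ℕ → ℕ)
    (hσ : Set.BijOn σ (pairSep d P : Set (ℕ × ℕ)) (Finset.Icc 1 D : Set ℕ))
    (hσval : ∀ q ∈ pairSep d P, ζ (σ q) = a q.1 - a q.2) :
    ∀ q : ℕ, 1 ≤ q → q ≤ D → ∀ h : ℝ,
      (∑ k ∈ Finset.Icc 1 (q - 1), ζ k) ≤ h → h ≤ (∑ k ∈ Finset.Icc 1 q, ζ k) →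
      Lfun d P a h = ((q : ℝ) - 1) + (h - ∑ k ∈ Finset.Icc 1 (q - 1), ζ k) / ζ q := by
  intro m hm1 hmD h hlo hhi
  set S : Finset (ℕ × ℕ) := pairSep d P with hSdef
  set S₁ : ℝ := ∑ k ∈ Finset.Icc 1 (m - 1), ζ k with hS₁
  have hmem : m ∈ Finset.Icc 1 D := Finset.mem_Icc.mpr ⟨hm1, hmD⟩
  -- positivity of ζ on Icc 1 D
  have hζpos : ∀ k ∈ Finset.Icc 1 D, 0 < ζ k := by
    intro k hk
    obtain ⟨p, hpS, hpk⟩ := hσ.surjOn (by simpa using hk)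
    have hpS' : p ∈ S := by simpa using hpS
    rw [← hpk, hσval p hpS']
    exact hpos p hpS'
  have hζm : 0 < ζ m := hζpos m hmem
  -- transfer of sums along σ
  have hsum : ∀ F : ℕ → ℝ, ∑ p ∈ S, F (σ p) = ∑ k ∈ Finset.Icc 1 D, F k := by
    intro F
    apply Finset.sum_bij (fun p _ => σ p)
    · intro p hp
      have := hσ.mapsTo (by simpa using hp)
      simpa using this
    · intro p hp p' hp' hpp'
      exact hσ.injOn (by simpa using hp) (by simpa using hp') hpp'
    · intro k hk
      obtain ⟨p, hpS, hpk⟩ := hσ.surjOn (by simpa using hk)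
      exact ⟨p, by simpa using hpS, hpk⟩
    · intro p hp; rfl
  -- splitting Icc 1 m
  have hsplit : ∑ k ∈ Finset.Icc 1 m, ζ k = S₁ + ζ m := by
    have hm : m = (m - 1) + 1 := by omega
    rw [hm, Finset.sum_Icc_succ_top (by omega), ← hm]
  set θ : ℝ := (h - S₁) / ζ m with hθdef
  have hθζ : θ * ζ m = h - S₁ := div_mul_cancel₀ _ (ne_of_gt hζm)
  have hθ0 : 0 ≤ θ := div_nonneg (by linarith) hζm.le
  have hθ1 : θ ≤ 1 := by
    rw [div_le_one hζm]
    rw [hsplit] at hhi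
    linarith
  -- indicator functions
  set χ : ℕ → ℝ := fun k => if k ≤ m - 1 then 1 else 0 with hχdef
  set c : ℕ → ℝ := fun k => if k ≤ m - 1 then 1 else if k = m then θ else 0 with hcdef
  have hfilter : (Finset.Icc 1 D).filter (fun k => k ≤ m - 1) = Finset.Icc 1 (m - 1) := by
    ext k
    simp only [Finset.mem_filter, Finset.mem_Icc]
    omega
  have lemA : ∑ k ∈ Finset.Icc 1 D, χ k * ζ k = S₁ := by
    rw [hS₁, ← hfilter, Finset.sum_filter]
    apply Finset.sum_congr rfl
    intro k _
    by_cases hk : k ≤ m - 1 <;> simp [hχdef, hk]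
  have lemB : ∑ k ∈ Finset.Icc 1 D, χ k = (m : ℝ) - 1 := by
    have : ∑ k ∈ Finset.Icc 1 D, χ k = ∑ k ∈ (Finset.Icc 1 D).filter (fun k => k ≤ m - 1), (1 : ℝ) := by
      rw [Finset.sum_filter]
    rw [this, hfilter, Finset.sum_const, Nat.card_Icc]
    have : (m - 1 + 1 - 1 : ℕ) = m - 1 := by omega
    rw [this, nsmul_eq_mul, mul_one, Nat.cast_sub hm1, Nat.cast_one]
  have lemC : ∑ k ∈ Finset.Icc 1 D, c k * ζ k = S₁ + θ * ζ m := by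
    have hterm : ∀ k, c k * ζ k = χ k * ζ k + (if k = m then θ * ζ k else 0) := by
      intro k
      by_cases hk : k ≤ m - 1
      · have : k ≠ m := by omega
        simp [hcdef, hχdef, hk, this]
      · have hmm : ¬ (m ≤ m - 1) := by omega
        by_cases hk' : k = m <;> simp [hcdef, hχdef, hk, hk', hmm]
    simp only [hterm]
    rw [Finset.sum_add_distrib, lemA, Finset.sum_ite_eq' (Finset.Icc 1 D) m (fun k => θ * ζ k),
      if_pos hmem]
  have lemD : ∑ k ∈ Finset.Icc 1 D, c k = ((m : ℝ) - 1) + θ := by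
    have hterm : ∀ k, c k = χ k + (if k = m then θ else 0) := by
      intro k
      by_cases hk : k ≤ m - 1
      · have : k ≠ m := by omega
        simp [hcdef, hχdef, hk, this]
      · have hmm : ¬ (m ≤ m - 1) := by omega
        by_cases hk' : k = m <;> simp [hcdef, hχdef, hk, hk', hmm]
    simp only [hterm]
    rw [Finset.sum_add_distrib, lemB, Finset.sum_ite_eq' (Finset.Icc 1 D) m (fun _ => θ),
      if_pos hmem]
  -- the target is in the set
  set T : ℝ := ((m : ℝ) - 1) + θ with hTdef
  have memT : T ∈ { s : ℝ | ∃ r : ℕ × ℕ → ℝ,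
      (∀ q ∈ pairSep d P, 0 ≤ r q ∧ r q ≤ 1) ∧
      (∑ q ∈ pairSep d P, r q * (a q.1 - a q.2)) ≤ h ∧
      s = ∑ q ∈ pairSep d P, r q } := by
    refine ⟨fun p => c (σ p), ?_, ?_, ?_⟩
    · intro p _
      constructor
      · have hmm : ¬ (m ≤ m - 1) := by omega
        by_cases hk : σ p ≤ m - 1
        · simp [hcdef, hk]
        · by_cases hk' : σ p = m <;> simp [hcdef, hk, hk', hθ0, hmm]
      · have hmm : ¬ (m ≤ m - 1) := by omega
        by_cases hk : σ p ≤ m - 1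
        · simp [hcdef, hk]
        · by_cases hk' : σ p = m <;> simp [hcdef, hk, hk', hθ1, hmm]
    · have : ∑ p ∈ S, c (σ p) * (a p.1 - a p.2) = ∑ p ∈ S, c (σ p) * ζ (σ p) := by
        apply Finset.sum_congr rfl
        intro p hp
        rw [hσval p (by simpa [hSdef] using hp)]
      rw [← hSdef, this, hsum (fun k => c k * ζ k), lemC, hθζ]
      linarith
    · rw [← hSdef, hsum c, lemD]
  -- every element of the set is ≤ T
  have ubT : ∀ s ∈ { s : ℝ | ∃ r : ℕ × ℕ → ℝ,
      (∀ q ∈ pairSep d P, 0 ≤ r q ∧ r q ≤ 1) ∧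
      (∑ q ∈ pairSep d P, r q * (a q.1 - a q.2)) ≤ h ∧
      s = ∑ q ∈ pairSep d P, r q }, s ≤ T := by
    rintro s ⟨r, hr01, hcost, rfl⟩
    have hcost' : ∑ p ∈ S, r p * ζ (σ p) ≤ h := by
      have : ∑ p ∈ S, r p * ζ (σ p) = ∑ p ∈ S, r p * (a p.1 - a p.2) := by
        apply Finset.sum_congr rfl
        intro p hp
        rw [hσval p (by simpa [hSdef] using hp)]
      rw [this]
      exact hcost
    have key : 0 ≤ ∑ p ∈ S, (r p - χ (σ p)) * (ζ (σ p) - ζ m) := by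
      apply Finset.sum_nonneg
      intro p hp
      have hpD : σ p ∈ Finset.Icc 1 D := by
        have := hσ.mapsTo (by simpa [hSdef] using hp)
        simpa using this
      have hpD' := Finset.mem_Icc.mp hpD
      have hr := hr01 p (by simpa [hSdef] using hp)
      by_cases hk : σ p ≤ m - 1
      · have h1 : χ (σ p) = 1 := by simp [hχdef, hk]
        have h2 : ζ (σ p) ≤ ζ m := hζ (σ p) m hpD'.1 (by omega) hmD
        rw [h1]
        nlinarith [hr.2]
      · have h1 : χ (σ p) = 0 := by simp [hχdef, hk]
        have h2 : ζ m ≤ ζ (σ p) := hζ m (σ p) hm1 (by omega) hpD'.2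
        rw [h1]
        exact mul_nonneg (by linarith [hr.1]) (by linarith)
    have expand : ∑ p ∈ S, (r p - χ (σ p)) * (ζ (σ p) - ζ m)
        = (∑ p ∈ S, r p * ζ (σ p)) - S₁ - ζ m * (∑ p ∈ S, r p) + ζ m * ((m : ℝ) - 1) := by
      have h1 : ∑ p ∈ S, χ (σ p) * ζ (σ p) = S₁ := by
        rw [hsum (fun k => χ k * ζ k)]; exact lemA
      have h2 : ∑ p ∈ S, χ (σ p) = (m : ℝ) - 1 := by
        rw [hsum χ]; exact lemB
      have hterm : ∀ p ∈ S, (r p - χ (σ p)) * (ζ (σ p) - ζ m)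
          = r p * ζ (σ p) - χ (σ p) * ζ (σ p) - ζ m * r p + ζ m * χ (σ p) := by
        intro p _; ring
      rw [Finset.sum_congr rfl hterm]
      rw [Finset.sum_add_distrib, Finset.sum_sub_distrib, Finset.sum_sub_distrib,
        h1, ← Finset.mul_sum, ← Finset.mul_sum, h2]
    rw [expand] at key
    -- conclude
    rw [hTdef]
    have hmul : (∑ p ∈ S, r p - ((m : ℝ) - 1)) * ζ m ≤ h - S₁ := by nlinarith
    have : ∑ p ∈ S, r p - ((m : ℝ) - 1) ≤ θ := by
      rw [hθdef, le_div_iff₀ hζm]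
      exact hmul
    linarith
  -- conclude equality of sSup
  rw [Lfun]
  exact le_antisymm (csSup_le ⟨T, memT⟩ ubT) (le_csSup ⟨T, ubT⟩ memT)
end

section
/- Let Γ be a countable index set, v : Γ → ℝ^d a family of vectors, and a_0 ∈ ℝ^d. Assume that for every real T the set {γ ∈ Γ : ⟨a_0, v_γ⟩ ≤ T} is finite and that limsup_{T→∞} (1/T)·log #{γ ∈ Γ : ⟨a_0, v_γ⟩ ≤ T} ≤ 1. Then for every a ∈ ℝ^d with ⟨a_0, a⟩ > 0, the growth indicator satisfies ψ(a) ≤ ⟨a_0, a⟩. -/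
open Filter

attribute [local instance] Classical.propDecidable

/-- An open cone in `ℝ^d`: an open set stable under multiplication by positive
scalars. -/
def IsOpenCone {d : ℕ} (C : Set (EuclideanSpace ℝ (Fin d))) : Prop :=
  IsOpen C ∧ ∀ x ∈ C, ∀ t : ℝ, 0 < t → t • x ∈ C

/-- `τ_C = limsup_{T→∞} (1/T) log #{γ : v γ ∈ C, ‖v γ‖ ≤ T}`, with
`τ_C = +∞` if one of these sets is infinite. -/
noncomputable def tauCone {ι : Type*} {d : ℕ} (v : ι → EuclideanSpace ℝ (Fin d))
    (C : Set (EuclideanSpace ℝ (Fin d))) : EReal :=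
  if ∀ T : ℝ, {γ : ι | v γ ∈ C ∧ ‖v γ‖ ≤ T}.Finite then
    Filter.limsup (fun T : ℝ =>
      ((Real.log ({γ : ι | v γ ∈ C ∧ ‖v γ‖ ≤ T}.ncard) / T : ℝ) : EReal))
      Filter.atTop
  else ⊤

/-- The growth indicator `ψ(a) = ‖a‖ · inf {τ_C : C an open cone containing a}`. -/
noncomputable def growthIndicator {ι : Type*} {d : ℕ}
    (v : ι → EuclideanSpace ℝ (Fin d)) (a : EuclideanSpace ℝ (Fin d)) : EReal :=
  ((‖a‖ : ℝ) : EReal) *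
    sInf { t : EReal | ∃ C : Set (EuclideanSpace ℝ (Fin d)),
      IsOpenCone C ∧ a ∈ C ∧ t = tauCone v C }

/-!
For `c > 0` the set `{x | ⟨a₀, x⟩ < c ‖x‖}` is an open cone, and it contains `a` as soon as
`c > ⟨a₀, a⟩ / ‖a‖`. Its points of norm at most `T` satisfy `⟨a₀, x⟩ ≤ c T`, so the counting
function of the cone at `T` is dominated by that of `⟨a₀, ·⟩` at `c T`, which gives `τ_C ≤ c`.
Letting `c` decrease to `⟨a₀, a⟩ / ‖a‖` yields `ψ(a) ≤ ⟨a₀, a⟩`.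
-/

open scoped RealInnerProductSpace

lemma Real.log_natCast_le_log_natCast {m n : ℕ} (h : m ≤ n) : Real.log m ≤ Real.log n := by
  rcases Nat.eq_zero_or_pos m with rfl | hm
  · simpa using Real.log_natCast_nonneg n
  · exact Real.log_le_log (by exact_mod_cast hm) (by exact_mod_cast h)

section

variable {d : ℕ}

lemma isOpenCone_setOf_inner_lt_mul_norm (a₀ : EuclideanSpace ℝ (Fin d)) (c : ℝ) :
    IsOpenCone {x : EuclideanSpace ℝ (Fin d) | ⟪a₀, x⟫ < c * ‖x‖} := by
  refine ⟨isOpen_lt (continuous_const.inner continuous_id) (continuous_const.mul continuous_norm),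
    fun x (hx : ⟪a₀, x⟫ < c * ‖x‖) t ht => ?_⟩
  show ⟪a₀, t • x⟫ < c * ‖t • x‖
  rw [real_inner_smul_right, norm_smul, Real.norm_eq_abs, abs_of_pos ht]
  nlinarith

lemma tauCone_le_of_subset {ι : Type*} (v : ι → EuclideanSpace ℝ (Fin d))
    {C : Set (EuclideanSpace ℝ (Fin d))} {S : ℝ → Set ι} {c ρ : ℝ}
    (hS : ∀ T, (S T).Finite) (hc : 0 < c)
    (hsub : ∀ T, {γ | v γ ∈ C ∧ ‖v γ‖ ≤ T} ⊆ S (c * T))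
    (hρ : limsup (fun T : ℝ => ((Real.log (S T).ncard / T : ℝ) : EReal)) atTop < ρ) :
    tauCone v C ≤ ((c * ρ : ℝ) : EReal) := by
  rw [tauCone, if_pos fun T => (hS _).subset (hsub T)]
  refine limsup_le_of_le (by isBoundedDefault) ?_
  have hev := (tendsto_id.const_mul_atTop hc).eventually (eventually_lt_of_limsup_lt hρ)
  filter_upwards [hev, eventually_gt_atTop 0] with T hT hT_pos
  have hT : Real.log (S (c * T)).ncard / (c * T) < ρ := by exact_mod_cast hT
  have hlog : Real.log {γ | v γ ∈ C ∧ ‖v γ‖ ≤ T}.ncard ≤ Real.log (S (c * T)).ncard :=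
    Real.log_natCast_le_log_natCast (Set.ncard_le_ncard (hsub T) (hS _))
  have : Real.log {γ | v γ ∈ C ∧ ‖v γ‖ ≤ T}.ncard / T ≤ c * ρ :=
    calc Real.log {γ | v γ ∈ C ∧ ‖v γ‖ ≤ T}.ncard / T
        ≤ Real.log (S (c * T)).ncard / T := by gcongr
      _ = c * (Real.log (S (c * T)).ncard / (c * T)) := by field_simp
      _ ≤ c * ρ := by gcongr
  exact_mod_cast this

variable {ι : Type*} {v : ι → EuclideanSpace ℝ (Fin d)} {a₀ : EuclideanSpace ℝ (Fin d)}

lemma tauCone_setOf_inner_lt_mul_norm_le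
    (hfin : ∀ T : ℝ, {γ : ι | ⟪a₀, v γ⟫ ≤ T}.Finite)
    (hlim : limsup (fun T : ℝ =>
        ((Real.log {γ : ι | ⟪a₀, v γ⟫ ≤ T}.ncard / T : ℝ) : EReal)) atTop ≤ 1)
    {c : ℝ} (hc : 0 < c) :
    tauCone v {x | ⟪a₀, x⟫ < c * ‖x‖} ≤ c := by
  refine EReal.le_of_forall_lt_iff_le.mp fun z hz => ?_
  have hz : c < z := by exact_mod_cast hz
  have hsub : ∀ T, {γ | v γ ∈ {x | ⟪a₀, x⟫ < c * ‖x‖} ∧ ‖v γ‖ ≤ T} ⊆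
      {γ | ⟪a₀, v γ⟫ ≤ c * T} :=
    fun T γ ⟨(hγC : ⟪a₀, v γ⟫ < c * ‖v γ‖), hγT⟩ => hγC.le.trans (by gcongr)
  have hρ : (1 : EReal) < ((z / c : ℝ) : EReal) := by exact_mod_cast (one_lt_div hc).mpr hz
  simpa [mul_div_cancel₀ z hc.ne'] using
    tauCone_le_of_subset v hfin hc hsub (hlim.trans_lt hρ)

lemma sInf_tauCone_le_of_inner_lt_mul_norm
    (hfin : ∀ T : ℝ, {γ : ι | ⟪a₀, v γ⟫ ≤ T}.Finite)
    (hlim : limsup (fun T : ℝ =>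
        ((Real.log {γ : ι | ⟪a₀, v γ⟫ ≤ T}.ncard / T : ℝ) : EReal)) atTop ≤ 1)
    {a : EuclideanSpace ℝ (Fin d)} {c : ℝ} (hc : 0 < c) (ha : ⟪a₀, a⟫ < c * ‖a‖) :
    sInf {t : EReal | ∃ C, IsOpenCone C ∧ a ∈ C ∧ t = tauCone v C} ≤ c :=
  le_trans (sInf_le ⟨_, isOpenCone_setOf_inner_lt_mul_norm a₀ c, ha, rfl⟩)
    (tauCone_setOf_inner_lt_mul_norm_le hfin hlim hc)

end

theorem stmt15_general {ι : Type*} (d : ℕ)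
    (v : ι → EuclideanSpace ℝ (Fin d)) (a0 : EuclideanSpace ℝ (Fin d))
    (hfin : ∀ T : ℝ, {γ : ι | (inner ℝ a0 (v γ) : ℝ) ≤ T}.Finite)
    (hlim : Filter.limsup (fun T : ℝ =>
        ((Real.log ({γ : ι | (inner ℝ a0 (v γ) : ℝ) ≤ T}.ncard) / T : ℝ) : EReal))
        Filter.atTop ≤ (1 : EReal))
    (a : EuclideanSpace ℝ (Fin d)) (hpos : (0 : ℝ) < (inner ℝ a0 a : ℝ)) :
    growthIndicator v a ≤ (((inner ℝ a0 a : ℝ) : ℝ) : EReal) := by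
  have hna : 0 < ‖a‖ := norm_pos_iff.mpr fun ha => by simp [ha] at hpos
  set s := ⟪a0, a⟫ / ‖a‖
  have hsInf : sInf {t : EReal | ∃ C, IsOpenCone C ∧ a ∈ C ∧ t = tauCone v C} ≤ s := by
    refine EReal.le_of_forall_lt_iff_le.mp fun z hz => ?_
    have hz : s < z := by exact_mod_cast hz
    exact sInf_tauCone_le_of_inner_lt_mul_norm hfin hlim ((div_pos hpos hna).trans hz)
      ((div_lt_iff₀ hna).mp hz)
  calc growthIndicator v a ≤ (‖a‖ : EReal) * s :=
        mul_le_mul_of_nonneg_left hsInf (by exact_mod_cast hna.le)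
    _ = ⟪a0, a⟫ := by rw [← EReal.coe_mul, mul_div_cancel₀ _ hna.ne']

/-- If for every `T` the set `{γ : ⟨a₀, v γ⟩ ≤ T}` is finite and
`limsup_{T→∞} (1/T) log #{γ : ⟨a₀, v γ⟩ ≤ T} ≤ 1`, then for every `a` with
`⟨a₀, a⟩ > 0` the growth indicator satisfies `ψ(a) ≤ ⟨a₀, a⟩`. -/
theorem stmt15 {ι : Type*} [Countable ι] (d : ℕ)
    (v : ι → EuclideanSpace ℝ (Fin d)) (a0 : EuclideanSpace ℝ (Fin d))
    (hfin : ∀ T : ℝ, {γ : ι | (inner ℝ a0 (v γ) : ℝ) ≤ T}.Finite)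
    (hlim : Filter.limsup (fun T : ℝ =>
        ((Real.log ({γ : ι | (inner ℝ a0 (v γ) : ℝ) ≤ T}.ncard) / T : ℝ) : EReal))
        Filter.atTop ≤ (1 : EReal))
    (a : EuclideanSpace ℝ (Fin d)) (hpos : (0 : ℝ) < (inner ℝ a0 a : ℝ)) :
    growthIndicator v a ≤ (((inner ℝ a0 a : ℝ) : ℝ) : EReal) :=
  stmt15_general d v a0 hfin hlim a hpos
end
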